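/- arXiv:math/0407430 — 10 statements merged into one kernel-verified Lean document; each statement's English description precedes it below -/
import Mathlib

section
/- Let p be an odd prime, ζ a primitive p-th root of unity, λ = ζ - 1, and π = λ·ℤ[ζ] the prime ideal above p. If α, β ∈ ℤ[ζ] satisfy α ≢ 0 (mod π) and α ≡ β (mod π), then α^p ≡ β^p (mod π^(p+1)). -/
open NumberField Polynomial Finset

private lemma prod_sub_prod_dvd' {R : Type*} [CommRing R] (d : R) (s : Finset ℕ)
    (f g : ℕ → R) (h : ∀ i ∈ s, d ∣ f i - g i) :
    d ∣ (∏ i ∈ s, f i) - ∏ i ∈ s, g i := by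
  classical
  induction s using Finset.induction_on with
  | empty => simp
  | @insert a s ha ih =>
    rw [Finset.prod_insert ha, Finset.prod_insert ha]
    have h1 := ih fun i hi => h i (Finset.mem_insert_of_mem hi)
    have h2 := h a (Finset.mem_insert_self a s)
    have key : f a * ∏ i ∈ s, f i - g a * ∏ i ∈ s, g i
        = f a * ((∏ i ∈ s, f i) - ∏ i ∈ s, g i) + (∏ i ∈ s, g i) * (f a - g a) := by ring
    rw [key]
    exact dvd_add (h1.mul_left _) (h2.mul_left _)

/-- If `α ≢ 0 (mod π)` and `α ≡ β (mod π)` in `ℤ[ζ]`, where `π = (ζ-1)` is the prime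
above the odd prime `p` in the `p`-th cyclotomic field, then `α^p ≡ β^p (mod π^(p+1))`. -/
theorem stmt0 (p : ℕ+) (hp : (p : ℕ).Prime) (hodd : Odd (p : ℕ))
    {K : Type*} [Field K] [NumberField K] [IsCyclotomicExtension {(p : ℕ)} ℚ K]
    (ζ : 𝓞 K) (hζ : IsPrimitiveRoot ζ (p : ℕ))
    (π : Ideal (𝓞 K)) (hπ : π = Ideal.span {ζ - 1})
    (α β : 𝓞 K) (hα : α ∉ π) (hαβ : α - β ∈ π) :
    α ^ (p : ℕ) - β ^ (p : ℕ) ∈ π ^ ((p : ℕ) + 1) := by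
  classical
  haveI : Fact ((p : ℕ)).Prime := ⟨hp⟩
  -- integer approximation lemma, proved before destructing (p : ℕ)
  have hζK : IsPrimitiveRoot (algebraMap (𝓞 K) K ζ) (p : ℕ) :=
    hζ.map_of_injective (IsFractionRing.injective (𝓞 K) K)
  have htop : Algebra.adjoin ℤ ({ζ} : Set (𝓞 K)) = ⊤ := by
    have h1 := hζK.integralPowerBasis.adjoin_gen_eq_top
    rw [hζK.integralPowerBasis_gen] at h1
    have h2 : hζK.toInteger = ζ := rfl
    rwa [h2] at h1
  set l : 𝓞 K := ζ - 1 with hl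
  have hL2 : ∀ x : 𝓞 K, ∃ m : ℤ, l ∣ x - (m : 𝓞 K) := by
    intro x
    have hx : x ∈ Algebra.adjoin ℤ ({ζ} : Set (𝓞 K)) := htop ▸ Algebra.mem_top
    induction hx using Algebra.adjoin_induction with
    | mem y hy =>
      rw [Set.mem_singleton_iff] at hy
      exact ⟨1, by rw [hy, Int.cast_one]⟩
    | algebraMap r =>
      refine ⟨r, ?_⟩
      have : (algebraMap ℤ (𝓞 K)) r = ((r : ℤ) : 𝓞 K) := by
        simp [eq_intCast]
      rw [this, sub_self]
      exact dvd_zero l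
    | add y z hy hz ihy ihz =>
      obtain ⟨a, ha⟩ := ihy; obtain ⟨b, hb⟩ := ihz
      refine ⟨a + b, ?_⟩
      push_cast
      have h : y + z - ((a : 𝓞 K) + b) = (y - a) + (z - b) := by ring
      rw [h]
      exact dvd_add ha hb
    | mul y z hy hz ihy ihz =>
      obtain ⟨a, ha⟩ := ihy; obtain ⟨b, hb⟩ := ihz
      refine ⟨a * b, ?_⟩
      push_cast
      have h : y * z - (a : 𝓞 K) * b = y * (z - b) + (b : 𝓞 K) * (y - a) := by ring
      rw [h]
      exact dvd_add (hb.mul_left y) (ha.mul_left _)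
  obtain ⟨n, hn⟩ : ∃ n, (p : ℕ) = n + 1 := ⟨(p : ℕ) - 1, by have := hp.two_le; omega⟩
  have hn2 : 2 ≤ n := by
    rcases Nat.lt_or_ge n 2 with h | h
    · interval_cases n
      · exact absurd (hn ▸ hp) (by decide)
      · exact absurd (hn ▸ hodd) (by decide)
    · exact h
  -- reduce to divisibility
  rw [hπ, Ideal.span_singleton_pow, Ideal.mem_span_singleton, hn]
  rw [hπ, Ideal.mem_span_singleton] at hαβ
  rw [hπ, Ideal.mem_span_singleton] at hα
  rw [hn] at hζ hodd hp
  haveI : Fact (Nat.Prime (n + 1)) := ⟨hp⟩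
  have hodd' : Odd (n + 1) := hodd
  have hEven : Even n := Nat.not_odd_iff_even.mp (Nat.odd_add_one.mp hodd')
  haveI : NeZero (n + 1) := ⟨Nat.succ_ne_zero n⟩
  -- L1 : l ∣ ζ^i - 1
  have hL1 : ∀ i : ℕ, l ∣ ζ ^ i - 1 := fun i => by
    simpa using sub_dvd_pow_sub_pow ζ 1 i
  -- the product formula : (n+1 : 𝓞 K) = ∏_{i=1}^{n} (1 - ζ^i)
  have himg : Polynomial.nthRootsFinset (n + 1) (1 : 𝓞 K)
      = (Finset.range (n + 1)).image (ζ ^ ·) := by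
    ext x
    rw [Polynomial.mem_nthRootsFinset (Nat.succ_pos n) (1 : 𝓞 K), Finset.mem_image]
    constructor
    · intro hx
      obtain ⟨i, hi, hix⟩ := hζ.eq_pow_of_pow_eq_one hx
      exact ⟨i, Finset.mem_range.2 hi, hix⟩
    · rintro ⟨i, -, rfl⟩
      rw [← pow_mul, mul_comm, pow_mul, hζ.pow_eq_one, one_pow]
  have hXprod : (X : (𝓞 K)[X]) ^ (n + 1) - 1
      = ∏ i ∈ Finset.range (n + 1), (X - C (ζ ^ i)) := by
    rw [Polynomial.X_pow_sub_one_eq_prod (Nat.succ_pos n) hζ, himg, Finset.prod_image]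
    intro i hi j hj hij
    exact hζ.pow_inj (Finset.mem_range.1 hi) (Finset.mem_range.1 hj) hij
  have hgeom : (∑ i ∈ Finset.range (n + 1), (X : (𝓞 K)[X]) ^ i)
      = ∏ i ∈ Finset.Ico 1 (n + 1), (X - C (ζ ^ i)) := by
    have hc : (X : (𝓞 K)[X]) - 1 ≠ 0 := by
      intro h
      have := congrArg (Polynomial.eval 0) h
      simp at this
    apply mul_right_cancel₀ hc
    rw [geom_sum_mul, hXprod, Finset.range_eq_Ico,
      Finset.prod_eq_prod_Ico_succ_bot (Nat.succ_pos n)]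
    rw [pow_zero, map_one, zero_add]
    ring
  have hpprod : ((n + 1 : ℕ) : 𝓞 K) = ∏ i ∈ Finset.Ico 1 (n + 1), (1 - ζ ^ i) := by
    have h := congrArg (Polynomial.eval 1) hgeom
    simpa [Polynomial.eval_prod, Polynomial.eval_finset_sum] using h
  have hfac : ∀ i : ℕ, (1 : 𝓞 K) - ζ ^ i = (-l) * ∑ j ∈ Finset.range i, ζ ^ j := by
    intro i
    have h := geom_sum_mul ζ i
    rw [hl]
    linear_combination h
  set S : 𝓞 K := ∏ i ∈ Finset.Ico 1 (n + 1), (∑ j ∈ Finset.range i, ζ ^ j) with hS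
  have hpS : ((n + 1 : ℕ) : 𝓞 K) = l ^ n * S := by
    rw [hpprod, Finset.prod_congr rfl fun i _ => hfac i, Finset.prod_mul_distrib,
      Finset.prod_const, Nat.card_Ico, Nat.add_sub_cancel, hEven.neg_pow]
  have hLp : l ^ n ∣ ((n + 1 : ℕ) : 𝓞 K) := ⟨S, hpS⟩
  have hlp1 : l ∣ ((n + 1 : ℕ) : 𝓞 K) :=
    dvd_trans (dvd_pow_self l (by omega : n ≠ 0)) hLp
  -- Wilson : l ∣ S + 1
  have hSw : l ∣ S + 1 := by
    have h1 : l ∣ S - ∏ i ∈ Finset.Ico 1 (n + 1), (i : 𝓞 K) := by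
      refine prod_sub_prod_dvd' l _ _ _ fun i _ => ?_
      have h : (∑ j ∈ Finset.range i, ζ ^ j) - (i : 𝓞 K)
          = ∑ j ∈ Finset.range i, (ζ ^ j - 1) := by
        rw [Finset.sum_sub_distrib]
        simp
      rw [h]
      exact Finset.dvd_sum fun j _ => hL1 j
    have h2 : (∏ i ∈ Finset.Ico 1 (n + 1), (i : 𝓞 K)) = ((n.factorial : ℕ) : 𝓞 K) := by
      rw [← Nat.cast_prod]
      congr 1
      exact Finset.prod_Ico_id_eq_factorial n
    have h3 : (n + 1) ∣ n.factorial + 1 := by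
      have hw : ((n.factorial : ℕ) : ZMod (n + 1)) = -1 := by
        have := ZMod.wilsons_lemma (p := n + 1)
        simpa using this
      have hz : (((n.factorial + 1 : ℕ)) : ZMod (n + 1)) = 0 := by
        push_cast [hw]
        ring
      exact (ZMod.natCast_eq_zero_iff _ _).1 hz
    have h4 : l ∣ ((n.factorial + 1 : ℕ) : 𝓞 K) :=
      dvd_trans hlp1 (by exact_mod_cast Nat.cast_dvd_cast (α := 𝓞 K) h3)
    have h5 : S + 1 = (S - ∏ i ∈ Finset.Ico 1 (n + 1), (i : 𝓞 K))
        + ((n.factorial + 1 : ℕ) : 𝓞 K) := by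
      rw [Nat.cast_add, Nat.cast_one, h2]
      ring
    rw [h5]
    exact dvd_add h1 h4
  have hLc : l ^ (n + 1) ∣ l ^ n + ((n + 1 : ℕ) : 𝓞 K) := by
    rw [hpS, show l ^ n + l ^ n * S = l ^ n * (1 + S) by ring, pow_succ]
    exact mul_dvd_mul_left _ (by rwa [add_comm] at hSw)
  -- Fermat : l ∣ x^(n+1) - x for all x
  have hL3 : ∀ x : 𝓞 K, l ∣ x ^ (n + 1) - x := by
    intro x
    obtain ⟨m, hm⟩ := hL2 x
    have h1 : l ∣ x ^ (n + 1) - (m : 𝓞 K) ^ (n + 1) :=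
      dvd_trans hm (sub_dvd_pow_sub_pow x _ _)
    have h2 : ((n + 1 : ℕ) : ℤ) ∣ m ^ (n + 1) - m := by
      have hz : ((m ^ (n + 1) - m : ℤ) : ZMod (n + 1)) = 0 := by
        push_cast
        rw [ZMod.pow_card]
        ring
      exact (ZMod.intCast_zmod_eq_zero_iff_dvd _ _).1 hz
    have h3 : l ∣ ((m : 𝓞 K) ^ (n + 1) - m) := by
      obtain ⟨c, hc⟩ := h2
      have he : (m : 𝓞 K) ^ (n + 1) - m = ((n + 1 : ℕ) : 𝓞 K) * (c : 𝓞 K) := by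
        have := congrArg (fun t : ℤ => ((t : 𝓞 K))) hc
        push_cast at this ⊢
        exact this
      rw [he]
      exact hlp1.mul_right _
    have h4 : x ^ (n + 1) - x
        = (x ^ (n + 1) - (m : 𝓞 K) ^ (n + 1)) + ((m : 𝓞 K) ^ (n + 1) - m) - (x - m) := by
      ring
    rw [h4]
    exact dvd_sub (dvd_add h1 h3) hm
  -- Fermat for units : l ∣ α^n - 1
  have hL4 : l ∣ α ^ n - 1 := by
    obtain ⟨m, hm⟩ := hL2 α
    have hndvd : ¬ (((n + 1 : ℕ) : ℤ) ∣ m) := by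
      intro h
      apply hα
      obtain ⟨c, hc⟩ := h
      have hln : l ∣ (m : 𝓞 K) := by
        have he : (m : 𝓞 K) = ((n + 1 : ℕ) : 𝓞 K) * (c : 𝓞 K) := by
          have := congrArg (fun t : ℤ => ((t : 𝓞 K))) hc
          push_cast at this ⊢
          exact this
        rw [he]
        exact hlp1.mul_right _
      have := dvd_add hm hln
      simpa using this
    have h2 : ((n + 1 : ℕ) : ℤ) ∣ m ^ n - 1 := by
      have hz0 : ((m : ZMod (n + 1))) ≠ 0 := fun h =>
        hndvd ((ZMod.intCast_zmod_eq_zero_iff_dvd _ _).1 h)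
      have hone := ZMod.pow_card_sub_one_eq_one hz0
      have hz : ((m ^ n - 1 : ℤ) : ZMod (n + 1)) = 0 := by
        push_cast
        rw [Nat.add_sub_cancel] at hone
        rw [hone]
        ring
      exact (ZMod.intCast_zmod_eq_zero_iff_dvd _ _).1 hz
    have h3 : l ∣ ((m : 𝓞 K) ^ n - 1) := by
      obtain ⟨c, hc⟩ := h2
      have he : (m : 𝓞 K) ^ n - 1 = ((n + 1 : ℕ) : 𝓞 K) * (c : 𝓞 K) := by
        have := congrArg (fun t : ℤ => ((t : 𝓞 K))) hc
        push_cast at this ⊢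
        exact this
      rw [he]
      exact hlp1.mul_right _
    have h4 : α ^ n - 1 = (α ^ n - (m : 𝓞 K) ^ n) + ((m : 𝓞 K) ^ n - 1) := by ring
    rw [h4]
    exact dvd_add (dvd_trans hm (sub_dvd_pow_sub_pow α _ _)) h3
  -- main computation
  obtain ⟨γ, hγ⟩ := hαβ
  set x : 𝓞 K := -(l * γ) with hx
  have hβ : β = α + x := by rw [hx, ← hγ]; ring
  have hlx : l ∣ x := ⟨-γ, by rw [hx]; ring⟩
  rw [hβ, add_pow]
  rw [Finset.sum_range_succ, Finset.sum_range_succ]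
  rw [Nat.choose_self, Nat.sub_self, pow_zero, mul_one, Nat.cast_one, mul_one,
    Nat.choose_succ_self_right, show n + 1 - n = 1 by omega, pow_one]
  have e0 : (0 : ℕ) ∈ Finset.range n := Finset.mem_range.2 (by omega)
  rw [← Finset.add_sum_erase _ _ e0]
  rw [pow_zero, one_mul, Nat.sub_zero, Nat.choose_zero_right, Nat.cast_one, mul_one]
  have hgoal : α ^ (n + 1) - (x ^ (n + 1)
        + (∑ k ∈ (Finset.range n).erase 0,
            α ^ k * x ^ (n + 1 - k) * ((n + 1).choose k : 𝓞 K))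
        + α ^ n * x * ((n + 1 : ℕ) : 𝓞 K) + α ^ (n + 1))
      = -((x ^ (n + 1) + α ^ n * x * ((n + 1 : ℕ) : 𝓞 K))
          + ∑ k ∈ (Finset.range n).erase 0,
            α ^ k * x ^ (n + 1 - k) * ((n + 1).choose k : 𝓞 K)) := by
    push_cast
    ring
  rw [hgoal]
  rw [dvd_neg]
  refine dvd_add ?_ (Finset.dvd_sum fun k hk => ?_)
  · -- principal part
    have hB : l ^ (n + 1) ∣ l ^ n * γ ^ (n + 1) + ((n + 1 : ℕ) : 𝓞 K) * γ * α ^ n := by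
      have d1 : l ^ (n + 1) ∣ l ^ n * (γ ^ (n + 1) - γ) := by
        rw [pow_succ]
        exact mul_dvd_mul_left _ (hL3 γ)
      have d2 : l ^ (n + 1) ∣ ((n + 1 : ℕ) : 𝓞 K) * (γ * (α ^ n - 1)) := by
        rw [pow_succ]
        exact mul_dvd_mul hLp (hL4.mul_left γ)
      have d3 : l ^ (n + 1) ∣ γ * (l ^ n + ((n + 1 : ℕ) : 𝓞 K)) := hLc.mul_left γ
      have e : l ^ n * γ ^ (n + 1) + ((n + 1 : ℕ) : 𝓞 K) * γ * α ^ n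
          = l ^ n * (γ ^ (n + 1) - γ) + ((n + 1 : ℕ) : 𝓞 K) * (γ * (α ^ n - 1))
            + γ * (l ^ n + ((n + 1 : ℕ) : 𝓞 K)) := by ring
      rw [e]
      exact dvd_add (dvd_add d1 d2) d3
    have e2 : x ^ (n + 1) + α ^ n * x * ((n + 1 : ℕ) : 𝓞 K)
        = -(l * (l ^ n * γ ^ (n + 1) + ((n + 1 : ℕ) : 𝓞 K) * γ * α ^ n)) := by
      rw [hx, hodd'.neg_pow, mul_pow]
      ring
    rw [e2, dvd_neg, show (n + 1 + 1) = (n + 1) + 1 from rfl, pow_succ, mul_comm (l ^ (n+1)) l]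
    exact mul_dvd_mul_left l hB
  · -- middle terms
    rw [Finset.mem_erase, Finset.mem_range] at hk
    obtain ⟨hk0, hkn⟩ := hk
    obtain ⟨c, hc⟩ := hp.dvd_choose_self hk0 (by omega)
    have h1 : l ^ (n + 1 - k) ∣ x ^ (n + 1 - k) := pow_dvd_pow_of_dvd hlx _
    have h2 : l ^ n ∣ ((n + 1).choose k : 𝓞 K) := by
      rw [hc, Nat.cast_mul]
      exact hLp.mul_right _
    have h3 : l ^ (n + 1 + 1) ∣ l ^ (n + 1 - k) * l ^ n := by
      rw [← pow_add]
      exact pow_dvd_pow _ (by omega)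
    rw [mul_assoc]
    exact ((h3.trans (mul_dvd_mul h1 h2)).mul_left _)
end

section
/- Let p be an odd prime, ζ a primitive p-th root of unity, and π = (ζ-1)ℤ[ζ]. For each integer k with 0 ≤ k ≤ p-1 and any α, β ∈ ℤ[ζ] with β ≢ 0 (mod π) and α ≡ β (mod π), there exists exactly one k with 0 ≤ k ≤ p-1 such that α - ζ^k·β ≡ 0 (mod π²). -/
open NumberField Polynomial Finset

/-- If `β ≢ 0 (mod π)` and `α ≡ β (mod π)` in `ℤ[ζ]`, there is exactly one
`k` with `0 ≤ k ≤ p-1` such that `α - ζ^k·β ≡ 0 (mod π²)`. -/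
theorem stmt1 (p : ℕ+) (hp : (p : ℕ).Prime) (hodd : Odd (p : ℕ))
    {K : Type*} [Field K] [NumberField K] [IsCyclotomicExtension {(p : ℕ)} ℚ K]
    (ζ : 𝓞 K) (hζ : IsPrimitiveRoot ζ (p : ℕ))
    (π : Ideal (𝓞 K)) (hπ : π = Ideal.span {ζ - 1})
    (α β : 𝓞 K) (hβ : β ∉ π) (hαβ : α - β ∈ π) :
    ∃! k : ℕ, k ≤ (p : ℕ) - 1 ∧ α - ζ ^ k * β ∈ π ^ 2 := by
  haveI : Fact (p : ℕ).Prime := ⟨hp⟩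
  have hp2 : p ≠ 2 := by
    intro h
    rw [h] at hodd
    exact (Nat.not_odd_iff_even.mpr (by decide)) hodd
  -- the primitive root in `K`
  have hζK : IsPrimitiveRoot (algebraMap (𝓞 K) K ζ) (p : ℕ) :=
    hζ.map_of_injective RingOfIntegers.coe_injective
  have htoInt : hζK.toInteger = ζ := rfl
  set lam : 𝓞 K := ζ - 1 with hlam
  have hprime : Prime lam := by
    have := hζK.zeta_sub_one_prime'
    rwa [htoInt] at this
  have hlam0 : lam ≠ 0 := hprime.ne_zero
  have hlamp : lam ∣ (p : 𝓞 K) := by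
    have := hζK.toInteger_sub_one_dvd_prime'
    rwa [htoInt] at this
  -- integer divisibility characterization
  have hint : ∀ n : ℤ, lam ∣ (n : 𝓞 K) ↔ (p : ℤ) ∣ n := by
    intro n
    have hnorm : Algebra.norm ℤ (hζK.toInteger - 1) = (p : ℤ) :=
      hζK.norm_toInteger_sub_one_of_prime_ne_two' (fun h => hp2 (PNat.eq h))
    have hpn : Prime (Algebra.norm ℤ (hζK.toInteger - 1)) :=
      hζK.prime_norm_toInteger_sub_one_of_prime_ne_two' (fun h => hp2 (PNat.eq h))
    have := Ideal.norm_dvd_iff (x := hζK.toInteger - 1) hpn (y := n)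
    rw [hnorm, htoInt] at this
    exact this.symm
  -- every element has an integer representative mod `lam`
  have hrep : ∀ x : 𝓞 K, ∃ n : ℤ, lam ∣ x - (n : 𝓞 K) := by
    intro x
    obtain ⟨f, hf⟩ := hζK.subOneIntegralPowerBasis.exists_eq_aeval' x
    refine ⟨f.coeff 0, ?_⟩
    have hgen : hζK.subOneIntegralPowerBasis.gen = lam := by
      rw [hζK.subOneIntegralPowerBasis_gen]; rfl
    have hXdvd : X ∣ f - C (f.coeff 0) := by
      rw [X_dvd_iff]
      simp
    have := map_dvd (aeval lam) hXdvd
    rw [hf, hgen]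
    simpa [map_sub, aeval_C, aeval_X] using this
  -- geometric sum facts
  have hgeo : ∀ k : ℕ, ζ ^ k - 1 = lam * (∑ i ∈ range k, ζ ^ i) := by
    intro k
    rw [hlam, mul_comm, geom_sum_mul]
  have hsk : ∀ k : ℕ, lam ∣ (∑ i ∈ range k, ζ ^ i) - (k : 𝓞 K) := by
    intro k
    have : (∑ i ∈ range k, ζ ^ i) - (k : 𝓞 K) = ∑ i ∈ range k, (ζ ^ i - 1) := by
      rw [Finset.sum_sub_distrib]
      simp
    rw [this]
    exact Finset.dvd_sum fun i _ => ⟨∑ j ∈ range i, ζ ^ j, hgeo i⟩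
  -- write α - β = lam * γ
  rw [hπ, Ideal.mem_span_singleton] at hαβ hβ
  obtain ⟨γ, hγ⟩ := hαβ
  -- the key equivalence
  have hkey : ∀ k : ℕ, (α - ζ ^ k * β ∈ π ^ 2) ↔ lam ∣ γ - (k : 𝓞 K) * β := by
    intro k
    have heq : α - ζ ^ k * β = lam * (γ - (∑ i ∈ range k, ζ ^ i) * β) := by
      have : α = β + lam * γ := by rw [← hγ]; ring
      rw [this, mul_sub, ← mul_assoc, ← hgeo k]
      ring
    rw [hπ, Ideal.span_singleton_pow, Ideal.mem_span_singleton, heq, pow_two,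
      mul_dvd_mul_iff_left hlam0]
    constructor
    · intro h
      have := dvd_add h (Dvd.dvd.mul_right (hsk k) β)
      rw [sub_mul] at this
      convert this using 1
      ring
    · intro h
      have := dvd_sub h (Dvd.dvd.mul_right (hsk k) β)
      rw [sub_mul] at this
      convert this using 1
      ring
  -- integer representatives for γ and β
  obtain ⟨c, hc⟩ := hrep γ
  obtain ⟨b, hb⟩ := hrep β
  have hbp : ¬ (p : ℤ) ∣ b := by
    intro h
    apply hβ
    have h1 : lam ∣ (b : 𝓞 K) := (hint b).mpr h
    have := dvd_add hb h1
    simpa using this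
  -- reduce the key condition to integers
  have hkey2 : ∀ k : ℕ, lam ∣ γ - (k : 𝓞 K) * β ↔ (p : ℤ) ∣ c - (k : ℤ) * b := by
    intro k
    rw [← hint]
    have haux : lam ∣ (γ - (k : 𝓞 K) * β) - ((c - (k : ℤ) * b : ℤ) : 𝓞 K) := by
      have h1 := dvd_sub hc (Dvd.dvd.mul_left hb ((k : 𝓞 K)))
      convert h1 using 1
      push_cast
      ring
    constructor
    · intro h
      have h2 := dvd_sub h haux
      simpa using h2
    · intro h
      have h2 := dvd_add haux h
      simpa using h2
  -- now solve in ZMod p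
  have hb0 : (b : ZMod p) ≠ 0 := by
    rwa [Ne, ZMod.intCast_zmod_eq_zero_iff_dvd]
  have hzmod : ∀ k : ℕ, ((p : ℤ) ∣ c - (k : ℤ) * b) ↔ (k : ZMod p) = (c : ZMod p) * (b : ZMod p)⁻¹ := by
    intro k
    rw [← ZMod.intCast_zmod_eq_zero_iff_dvd]
    push_cast
    rw [sub_eq_zero, eq_mul_inv_iff_mul_eq₀ hb0]
    exact eq_comm
  set x : ZMod p := (c : ZMod p) * (b : ZMod p)⁻¹ with hx
  refine ⟨x.val, ⟨?_, ?_⟩, ?_⟩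
  · exact Nat.le_sub_one_of_lt (ZMod.val_lt x)
  · rw [hkey, hkey2, hzmod]
    simp [ZMod.natCast_val, ZMod.cast_id]
  · intro k ⟨hk1, hk2⟩
    rw [hkey, hkey2, hzmod] at hk2
    have hkval : k = ((k : ZMod p)).val := by
      rw [ZMod.val_cast_of_lt]
      have := p.pos
      omega
    rw [hkval, hk2]
end

section
/- Let p be an odd prime and d, g coprime natural numbers with d·g = p-1. Let σ be an 𝔽_p-linear automorphism of a finite 𝔽_p-module with σ^(p-1) = 1, b an element, and r_1, r_d, r_g the degrees of the minimal polynomials of σ, σ^d, σ^g respectively annihilating b. If r_d ≥ 1 and r_g ≥ 1, then r_d · r_g ≥ r_1; moreover if r_d = 1 then r_g = r_1. -/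
open Polynomial

section Aux

variable {K : Type*} [Field K] {M : Type*} [AddCommGroup M] [Module K M]

/-- Multiplying an annihilating polynomial by anything still annihilates. -/
private lemma aux_ann_mul (τ : Module.End K M) (b : M) {P : K[X]}
    (hP : (aeval τ P) b = 0) (Q : K[X]) : (aeval τ (Q * P)) b = 0 := by
  rw [map_mul, Module.End.mul_apply, hP, map_zero]

/-- The minimal (monic) annihilating polynomial divides every annihilating polynomial. -/
private lemma aux_min_dvd (τ : Module.End K M) (b : M) {P : K[X]} (hP : P.Monic)
    (hann : (aeval τ P) b = 0)
    (hmin : ∀ Q : K[X], Q ≠ 0 → (aeval τ Q) b = 0 → P.degree ≤ Q.degree)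
    {Q : K[X]} (hQ : (aeval τ Q) b = 0) : P ∣ Q := by
  rw [← Polynomial.modByMonic_eq_zero_iff_dvd hP]
  by_contra hne
  have hdeg : (Q %ₘ P).degree < P.degree := Polynomial.degree_modByMonic_lt Q hP
  have hrann : (aeval τ (Q %ₘ P)) b = 0 := by
    have hQeq : Q %ₘ P = Q - P * (Q /ₘ P) := by
      rw [eq_sub_iff_add_eq]
      exact Polynomial.modByMonic_add_div Q P
    rw [hQeq, map_sub, LinearMap.sub_apply, hQ, mul_comm,
      aux_ann_mul τ b hann (Q /ₘ P), sub_zero]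
  exact absurd (hmin _ hne hrann) (not_le.mpr hdeg)

end Aux

/-- Let `d, g` be coprime with `d·g = p-1`, and let `r₁, r_d, r_g` be the degrees of the
minimal polynomials of `σ`, `σ^d`, `σ^g` annihilating `b`. If `r_d ≥ 1` and `r_g ≥ 1`
then `r_d·r_g ≥ r₁`; moreover if `r_d = 1` then `r_g = r₁`. -/
theorem stmt5 (p d g : ℕ) (hp : p.Prime) (hodd : Odd p)
    (hcop : Nat.Coprime d g) (hdg : d * g = p - 1)
    {M : Type*} [AddCommGroup M] [Module (ZMod p) M] [Finite M]
    (σ : Module.End (ZMod p) M) (hσ : σ ^ (p - 1) = 1)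
    (b : M)
    (P1 Pd Pg : Polynomial (ZMod p))
    (h1monic : P1.Monic) (hdmonic : Pd.Monic) (hgmonic : Pg.Monic)
    (h1ann : (Polynomial.aeval σ P1) b = 0)
    (h1min : ∀ Q : Polynomial (ZMod p), Q ≠ 0 → (Polynomial.aeval σ Q) b = 0 →
      P1.degree ≤ Q.degree)
    (hdann : (Polynomial.aeval (σ ^ d) Pd) b = 0)
    (hdmin : ∀ Q : Polynomial (ZMod p), Q ≠ 0 → (Polynomial.aeval (σ ^ d) Q) b = 0 →
      Pd.degree ≤ Q.degree)
    (hgann : (Polynomial.aeval (σ ^ g) Pg) b = 0)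
    (hgmin : ∀ Q : Polynomial (ZMod p), Q ≠ 0 → (Polynomial.aeval (σ ^ g) Q) b = 0 →
      Pg.degree ≤ Q.degree)
    (hrd : 1 ≤ Pd.natDegree) (hrg : 1 ≤ Pg.natDegree) :
    P1.natDegree ≤ Pd.natDegree * Pg.natDegree ∧
      (Pd.natDegree = 1 → Pg.natDegree = P1.natDegree) := by
  classical
  haveI : Fact p.Prime := ⟨hp⟩
  set K := ZMod p
  have hp2 : 2 ≤ p := hp.two_le
  have hpm1 : p - 1 ≠ 0 := by omega
  have hd1 : 1 ≤ d := by
    rcases Nat.eq_zero_or_pos d with h | h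
    · subst h; simp at hdg; omega
    · exact h
  have hg1 : 1 ≤ g := by
    rcases Nat.eq_zero_or_pos g with h | h
    · subst h; simp at hdg; omega
    · exact h
  -- the polynomial `T = X^(p-1) - 1`
  set T : K[X] := X ^ (p - 1) - C 1 with hT
  have hTmonic : T.Monic := monic_X_pow_sub_C 1 hpm1
  have hTne : T ≠ 0 := hTmonic.ne_zero
  have hTsep : T.Separable := by
    refine Polynomial.separable_X_pow_sub_C 1 ?_ one_ne_zero
    have : ((p - 1 : ℕ) : K) = -1 := by
      push_cast [Nat.cast_sub hp.one_le]
      simp [K, ZMod.natCast_self]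
    rw [this]
    simp
  -- `T` splits: it divides `X^p - X` which has all of `ZMod p` as roots
  have hTsplits : T.Splits := by
    have hdvd : T ∣ (X ^ p - X : K[X]) := by
      refine ⟨X, ?_⟩
      have hps : p - 1 + 1 = p := by omega
      rw [hT, sub_mul, Polynomial.C_1, one_mul, ← pow_succ, hps]
    have hbig : (X ^ p - X : K[X]).Splits := by
      rw [splits_iff_card_roots]
      have hcard : Fintype.card K = p := ZMod.card p
      have hroots : (X ^ p - X : K[X]).roots = (Finset.univ : Finset K).val := by
        have := FiniteField.roots_X_pow_card_sub_X K
        rwa [hcard] at this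
      rw [hroots]
      have hnd : (X ^ p - X : K[X]).natDegree = p :=
        FiniteField.X_pow_card_sub_X_natDegree_eq K (by omega)
      rw [hnd]
      simp [hcard]
    exact Polynomial.Splits.of_dvd hbig
      (FiniteField.X_pow_card_sub_X_ne_zero K (show 1 < p by omega)) hdvd
  -- σ^e satisfies T for any e
  have hTann : ∀ e : ℕ, (aeval (σ ^ e) T) b = 0 := by
    intro e
    have hpow : (σ ^ e) ^ (p - 1) = 1 := by
      rw [← pow_mul, mul_comm, pow_mul, hσ, one_pow]
    simp [hT, map_sub, map_pow, hpow]
  have hT1ann : (aeval σ T) b = 0 := by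
    have := hTann 1
    rwa [pow_one] at this
  -- the three minimal polynomials divide T
  have hP1T : P1 ∣ T := aux_min_dvd σ b h1monic h1ann h1min hT1ann
  have hPdT : Pd ∣ T := aux_min_dvd (σ ^ d) b hdmonic hdann hdmin (hTann d)
  have hPgT : Pg ∣ T := aux_min_dvd (σ ^ g) b hgmonic hgann hgmin (hTann g)
  have hP1sep : P1.Separable := hTsep.of_dvd hP1T
  have hP1splits : P1.Splits :=
    Polynomial.Splits.of_dvd hTsplits hTne hP1T
  have hP1ne : P1 ≠ 0 := h1monic.ne_zero
  -- the root set of P1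
  set S : Finset K := P1.roots.toFinset with hS
  have hSnodup : P1.roots.Nodup := Polynomial.nodup_roots hP1sep
  have hSval : S.val = P1.roots := by
    rw [hS, Multiset.toFinset_val, Multiset.dedup_eq_self.mpr hSnodup]
  have hScard : S.card = P1.natDegree := by
    have h1 : Multiset.card P1.roots = P1.natDegree := by
      have := hP1splits.natDegree_eq_card_roots
      simpa using this.symm
    rw [← h1, Finset.card_def, hSval]
  -- P1 is the product of (X - λ) over S
  have hP1prod : P1 = ∏ lam ∈ S, (X - C lam) := by
    have := hP1splits.eq_prod_roots_of_monic h1monic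
    rw [this, Finset.prod, hSval]
  -- every root of P1 is a (p-1)-st root of unity, in particular nonzero
  have hSroot : ∀ lam ∈ S, lam ^ (p - 1) = 1 := by
    intro lam hlam
    have hlroot : T.IsRoot lam := by
      obtain ⟨t, ht⟩ := hP1T
      have : P1.IsRoot lam := by
        rw [Multiset.mem_toFinset, Polynomial.mem_roots hP1ne] at hlam
        exact hlam
      rw [ht]
      simpa using Or.inl this
    have := hlroot
    simp only [hT, IsRoot.def, eval_sub, eval_pow, eval_X, eval_C] at this
    exact sub_eq_zero.mp this
  have hSne : ∀ lam ∈ S, lam ≠ 0 := by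
    intro lam hlam h0
    have := hSroot lam hlam
    rw [h0, zero_pow hpm1] at this
    exact zero_ne_one this
  -- key: for e ≥ 1 and Pe the minimal polynomial of σ^e, natDegree Pe = |S^e|
  have key : ∀ (e : ℕ), 1 ≤ e → ∀ (Pe : K[X]), Pe.Monic →
      (aeval (σ ^ e) Pe) b = 0 →
      (∀ Q : K[X], Q ≠ 0 → (aeval (σ ^ e) Q) b = 0 → Pe.degree ≤ Q.degree) →
      Pe.natDegree = (S.image (· ^ e)).card := by
    intro e he Pe hemonic heann hemin
    set Se : Finset K := S.image (· ^ e) with hSe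
    set Qe : K[X] := ∏ mu ∈ Se, (X - C mu) with hQe
    have hQemonic : Qe.Monic := monic_prod_of_monic _ _ (fun mu _ => monic_X_sub_C mu)
    have hQend : Qe.natDegree = Se.card := by
      rw [hQe, Polynomial.natDegree_prod _ _ (fun mu _ => X_sub_C_ne_zero mu)]
      simp
    -- the composition Qe(X^e) is annihilated by σ since P1 divides it
    have hcompmonic : (Qe.comp (X ^ e)).Monic :=
      hQemonic.comp (monic_X_pow e) (by simp; omega)
    have hP1dvdcomp : P1 ∣ Qe.comp (X ^ e) := by
      have hsub : S.val ≤ (Qe.comp (X ^ e)).roots := by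
        rw [Multiset.le_iff_subset (hSval ▸ hSnodup)]
        intro lam hlam
        rw [Polynomial.mem_roots hcompmonic.ne_zero]
        have hlamS : lam ∈ S := hlam
        have : lam ^ e ∈ Se := Finset.mem_image_of_mem _ hlamS
        rw [IsRoot.def, eval_comp, eval_pow, eval_X, hQe, eval_prod]
        exact Finset.prod_eq_zero this (by simp)
      calc P1 = (S.val.map fun a => X - C a).prod := by
                rw [hP1prod, Finset.prod]
        _ ∣ ((Qe.comp (X ^ e)).roots.map fun a => X - C a).prod :=
                Multiset.prod_dvd_prod_of_le (Multiset.map_le_map hsub)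
        _ ∣ Qe.comp (X ^ e) := Polynomial.prod_multiset_X_sub_C_dvd _
    have hQeann : (aeval (σ ^ e) Qe) b = 0 := by
      have hcomp : (aeval σ (Qe.comp (X ^ e))) b = (aeval (σ ^ e) Qe) b := by
        rw [Polynomial.aeval_comp]
        simp
      obtain ⟨t, ht⟩ := hP1dvdcomp
      rw [← hcomp, ht, mul_comm]
      exact aux_ann_mul σ b h1ann t
    -- so Pe ∣ Qe and natDegree Pe ≤ |Se|
    have hPedvd : Pe ∣ Qe := aux_min_dvd (σ ^ e) b hemonic heann hemin hQeann
    have hle1 : Pe.natDegree ≤ Se.card := by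
      rw [← hQend]
      exact Polynomial.natDegree_le_of_dvd hPedvd hQemonic.ne_zero
    -- conversely: Se ⊆ roots of Pe
    have hPecompann : (aeval σ (Pe.comp (X ^ e))) b = 0 := by
      rw [Polynomial.aeval_comp]
      simpa using heann
    have hP1dvdPe : P1 ∣ Pe.comp (X ^ e) := aux_min_dvd σ b h1monic h1ann h1min hPecompann
    have hge1 : Se.card ≤ Pe.natDegree := by
      have hsub : Se ⊆ Pe.roots.toFinset := by
        intro mu hmu
        rw [hSe, Finset.mem_image] at hmu
        obtain ⟨lam, hlam, rfl⟩ := hmu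
        rw [Multiset.mem_toFinset, Polynomial.mem_roots hemonic.ne_zero]
        obtain ⟨t, ht⟩ := hP1dvdPe
        have hroot1 : P1.IsRoot lam := by
          rw [hS, Multiset.mem_toFinset, Polynomial.mem_roots hP1ne] at hlam
          exact hlam
        have : (Pe.comp (X ^ e)).IsRoot lam := by
          rw [ht]
          simpa using Or.inl hroot1
        rw [IsRoot.def, eval_comp, eval_pow, eval_X] at this
        exact this
      calc Se.card ≤ Pe.roots.toFinset.card := Finset.card_le_card hsub
        _ ≤ Multiset.card Pe.roots := Multiset.toFinset_card_le _
        _ ≤ Pe.natDegree := Polynomial.card_roots' Pe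
    omega
  have hkd : Pd.natDegree = (S.image (· ^ d)).card := key d hd1 Pd hdmonic hdann hdmin
  have hkg : Pg.natDegree = (S.image (· ^ g)).card := key g hg1 Pg hgmonic hgann hgmin
  -- injectivity of λ ↦ (λ^d, λ^g) on S
  have hinj : ∀ lam ∈ S, ∀ mu ∈ S, lam ^ d = mu ^ d → lam ^ g = mu ^ g → lam = mu := by
    intro lam hlam mu hmu hd' hg'
    have hmune : mu ≠ 0 := hSne mu hmu
    have hnu_d : (lam / mu) ^ d = 1 := by
      rw [div_pow, hd', div_self (pow_ne_zero d hmune)]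
    have hnu_g : (lam / mu) ^ g = 1 := by
      rw [div_pow, hg', div_self (pow_ne_zero g hmune)]
    have h1 : orderOf (lam / mu) ∣ d := orderOf_dvd_of_pow_eq_one hnu_d
    have h2 : orderOf (lam / mu) ∣ g := orderOf_dvd_of_pow_eq_one hnu_g
    have hdvd1 : orderOf (lam / mu) ∣ 1 := hcop ▸ Nat.dvd_gcd h1 h2
    have hone : lam / mu = 1 := orderOf_eq_one_iff.mp (Nat.dvd_one.mp hdvd1)
    rw [div_eq_one_iff_eq hmune] at hone
    exact hone
  constructor
  · -- main inequality
    rw [← hScard, hkd, hkg, ← Finset.card_product]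
    apply Finset.card_le_card_of_injOn (fun lam => (lam ^ d, lam ^ g))
    · intro lam hlam
      rw [Finset.mem_coe, Finset.mem_product]
      exact ⟨Finset.mem_image_of_mem _ hlam, Finset.mem_image_of_mem _ hlam⟩
    · intro lam hlam mu hmu h
      rw [Prod.mk.injEq] at h
      exact hinj lam hlam mu hmu h.1 h.2
  · -- the case r_d = 1
    intro hrd1
    have hSd1 : (S.image (· ^ d)).card = 1 := by rw [← hkd, hrd1]
    have hconst : ∀ lam ∈ S, ∀ mu ∈ S, lam ^ d = mu ^ d := by
      intro lam hlam mu hmu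
      have h1 : lam ^ d ∈ S.image (· ^ d) := Finset.mem_image_of_mem _ hlam
      have h2 : mu ^ d ∈ S.image (· ^ d) := Finset.mem_image_of_mem _ hmu
      exact Finset.card_le_one.mp (le_of_eq hSd1) _ h1 _ h2
    have : (S.image (· ^ g)).card = S.card := by
      apply Finset.card_image_of_injOn
      intro lam hlam mu hmu h
      exact hinj lam hlam mu hmu (hconst lam hlam mu hmu) h
    rw [hkg, this, hScard]
end

section
/- Let p be an odd prime, u a primitive root modulo p, ζ a primitive p-th root of unity, σ the automorphism of ℚ(ζ) with σ(ζ) = ζ^u, and π = (ζ-1)ℤ[ζ]. Suppose C ∈ ℚ(ζ) satisfies v_π(C) = 0, C ≡ 1 (mod π), σ(C) ≡ C^μ (mod π^(p+1)) for some μ ∈ 𝔽_p* with μ = u^ν in 𝔽_p impossible unless ν ≡ ν₀ (mod p-1). If π^ν exactly divides C - 1 with ν < p, then u^ν ≡ μ (mod p). -/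
open NumberField

section Aux
variable {R : Type*} [CommRing R]

lemma aux_binom (d g : R) (m : ℕ) :
    ∃ s : R, (d + g) ^ (m + 1) = d ^ (m + 1) + ((m : R) + 1) * d ^ m * g + g ^ 2 * s := by
  induction m with
  | zero => exact ⟨0, by ring⟩
  | succ m ih =>
    obtain ⟨s, hs⟩ := ih
    refine ⟨d * s + ((m : R) + 1) * d ^ m + g * s, ?_⟩
    have h : (d + g) ^ (m + 1 + 1) = (d + g) * (d + g) ^ (m + 1) := by ring
    rw [h, hs]
    push_cast
    ring

lemma aux_pow_one_sub (x : R) (u : ℕ) : (x - 1) ^ 2 ∣ x ^ u - 1 - (u : R) * (x - 1) := by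
  induction u with
  | zero => simp
  | succ u ih =>
    obtain ⟨k, hk⟩ := ih
    refine ⟨x * k + (u : R), ?_⟩
    have h : x ^ (u + 1) - 1 - ((u : ℕ) + 1 : R) * (x - 1)
        = x * (x ^ u - 1 - (u : R) * (x - 1)) + (u : R) * (x - 1) ^ 2 := by ring
    push_cast
    push_cast at h
    rw [h, hk]
    ring

lemma aux_pow_diff (l x y : R) (h2 : l ^ 2 ∣ x - y) (hx : l ∣ x) (hy : l ∣ y) (n : ℕ) :
    l ^ (n + 1) ∣ x ^ n - y ^ n := by
  induction n with
  | zero => simp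
  | succ n ih =>
    have h : x ^ (n + 1) - y ^ (n + 1) = x * (x ^ n - y ^ n) + y ^ n * (x - y) := by ring
    rw [h]
    refine dvd_add ?_ ?_
    · rw [pow_succ, mul_comm (l ^ (n + 1)) l]
      exact mul_dvd_mul hx ih
    · have h2' : l ^ (n + 1 + 1) = l ^ n * l ^ 2 := by ring
      rw [h2']
      exact mul_dvd_mul (pow_dvd_pow_of_dvd hy n) h2

end Aux

/-- `x ≡ y (mod π^n)` for elements of the cyclotomic field `K = ℚ(ζ)`: after clearing
a denominator `d` prime to `π`, the numerators are congruent mod `π^n` in `ℤ[ζ]`. -/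
def PiCongr {K : Type*} [Field K] [NumberField K]
    (π : Ideal (𝓞 K)) (n : ℕ) (x y : K) : Prop :=
  ∃ a b d : 𝓞 K, d ∉ π ∧
    x * algebraMap (𝓞 K) K d = algebraMap (𝓞 K) K a ∧
    y * algebraMap (𝓞 K) K d = algebraMap (𝓞 K) K b ∧ a - b ∈ π ^ n

/-- `x ∈ ℚ(ζ)` has `v_π(x) = 0`: it is the quotient of two integers both prime to `π`. -/
def PiValZero {K : Type*} [Field K] [NumberField K]
    (π : Ideal (𝓞 K)) (x : K) : Prop :=
  ∃ a d : 𝓞 K, a ∉ π ∧ d ∉ π ∧ x * algebraMap (𝓞 K) K d = algebraMap (𝓞 K) K a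

/-- If `C ∈ ℚ(ζ)` has `v_π(C) = 0`, `C ≡ 1 (mod π)`, `σ(C) ≡ C^μ (mod π^(p+1))`, and
`π^ν` exactly divides `C - 1` with `ν < p`, then `u^ν ≡ μ (mod p)`. -/
theorem stmt7 (p : ℕ+) (hp : (p : ℕ).Prime) (hodd : Odd (p : ℕ))
    (u : ℕ) (hu : orderOf (u : ZMod (p : ℕ)) = (p : ℕ) - 1)
    {K : Type*} [Field K] [NumberField K] [IsCyclotomicExtension {(p : ℕ)} ℚ K]
    (ζ : 𝓞 K) (hζ : IsPrimitiveRoot ζ (p : ℕ))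
    (σ : K ≃ₐ[ℚ] K) (hσζ : σ (algebraMap (𝓞 K) K ζ) = (algebraMap (𝓞 K) K ζ) ^ u)
    (π : Ideal (𝓞 K)) (hπ : π = Ideal.span {ζ - 1})
    (μ : ℕ) (hμ1 : 1 ≤ μ) (hμ2 : μ ≤ (p : ℕ) - 1)
    (C : K) (hval : PiValZero π C) (hC1 : PiCongr π 1 C 1)
    (hσC : PiCongr π ((p : ℕ) + 1) (σ C) (C ^ μ))
    (ν : ℕ) (hν : ν < (p : ℕ))
    (hexact : PiCongr π ν C 1 ∧ ¬ PiCongr π (ν + 1) C 1) :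
    (u : ZMod (p : ℕ)) ^ ν = (μ : ZMod (p : ℕ)) := by
  haveI : Fact (p : ℕ).Prime := ⟨hp⟩
  obtain ⟨m, rfl⟩ : ∃ m, μ = m + 1 := ⟨μ - 1, (Nat.succ_pred_eq_of_pos hμ1).symm⟩
  have hinj : Function.Injective (algebraMap (𝓞 K) K) := RingOfIntegers.coe_injective
  have hζK : IsPrimitiveRoot (algebraMap (𝓞 K) K ζ) (p : ℕ) := hζ.map_of_injective hinj
  have htoInt : hζK.toInteger = ζ := by ext; rfl
  have hlam : Prime (ζ - 1) := htoInt ▸ hζK.zeta_sub_one_prime'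
  -- ζ - 1 divides p
  have hlp : (ζ - 1) ∣ ((p : ℕ) : 𝓞 K) := by
    have h0 : (Polynomial.cyclotomic (p : ℕ) (𝓞 K)).eval ζ = 0 := hζ.isRoot_cyclotomic p.pos
    have h1 : (Polynomial.cyclotomic (p : ℕ) (𝓞 K)).eval 1 = ((p : ℕ) : 𝓞 K) :=
      Polynomial.eval_one_cyclotomic_prime
    have h2 := Polynomial.sub_dvd_eval_sub ζ 1 (Polynomial.cyclotomic (p : ℕ) (𝓞 K))
    rw [h0, h1, zero_sub] at h2
    exact (dvd_neg).mp h2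
  -- an integer divisible by ζ - 1 is divisible by p
  have hint : ∀ n : ℤ, (ζ - 1) ∣ (n : 𝓞 K) → (p : ℤ) ∣ n := by
    intro n hn
    by_contra hnp
    have hcop : IsCoprime ((p : ℕ) : ℤ) n := by
      rw [Int.isCoprime_iff_gcd_eq_one, Int.gcd]
      simp only [Int.natAbs_natCast]
      exact (hp.coprime_iff_not_dvd).mpr
        (fun hd => hnp (Int.dvd_natAbs.mp (Int.natCast_dvd_natCast.mpr hd)))
    obtain ⟨s, t, hst⟩ := hcop
    have hone : (ζ - 1) ∣ 1 := by
      have hcast := congrArg (fun z : ℤ => (z : 𝓞 K)) hst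
      push_cast at hcast
      have hdd : (ζ - 1) ∣ ((s : 𝓞 K) * ((p : ℕ) : 𝓞 K) + (t : 𝓞 K) * (n : 𝓞 K)) :=
        dvd_add (Dvd.dvd.mul_left hlp _) (Dvd.dvd.mul_left hn _)
      rwa [hcast] at hdd
    exact hlam.not_isUnit (isUnit_of_dvd_one hone)
  -- every algebraic integer is congruent to a rational integer mod ζ - 1
  have hres : ∀ x : 𝓞 K, ∃ n : ℤ, (ζ - 1) ∣ x - (n : 𝓞 K) := by
    intro x
    obtain ⟨f, hf⟩ := hζK.integralPowerBasis.exists_eq_aeval' x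
    refine ⟨f.eval 1, ?_⟩
    have hgen : hζK.integralPowerBasis.gen = ζ := by rw [hζK.integralPowerBasis_gen, htoInt]
    rw [hgen] at hf
    have h1 : x = (f.map (algebraMap ℤ (𝓞 K))).eval ζ := by
      rw [hf, Polynomial.aeval_def, Polynomial.eval_map]
    have h2 : ((f.eval 1 : ℤ) : 𝓞 K) = (f.map (algebraMap ℤ (𝓞 K))).eval 1 := by
      rw [Polynomial.eval_map, Polynomial.eval₂_at_one]; rfl
    rw [h1, h2]
    exact Polynomial.sub_dvd_eval_sub ζ 1 _
  -- membership in powers of π is divisibility by ζ - 1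
  have hmemn : ∀ (x : 𝓞 K) (n : ℕ), x ∈ π ^ n ↔ (ζ - 1) ^ n ∣ x := by
    intro x n
    rw [hπ, Ideal.span_singleton_pow, Ideal.mem_span_singleton]
  have hmem1 : ∀ x : 𝓞 K, x ∈ π ↔ (ζ - 1) ∣ x := by
    intro x; rw [hπ, Ideal.mem_span_singleton]
  -- the numerator and denominator of C
  obtain ⟨a, d, ha, hd, hCd⟩ := hval
  have hd' : ¬ (ζ - 1) ∣ d := fun h => hd ((hmem1 d).mpr h)
  -- translation of PiCongr π n C 1
  have hcongr_to : ∀ n : ℕ, PiCongr π n C 1 → (ζ - 1) ^ n ∣ a - d := by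
    rintro n ⟨a', b', d', hd₀, h1, h2, h3⟩
    have hd₀' : ¬ (ζ - 1) ∣ d' := fun h => hd₀ ((hmem1 d').mpr h)
    have hb : d' = b' := hinj (by simpa using h2)
    have had : a * d' = a' * d := by
      apply hinj
      rw [map_mul, map_mul, ← hCd, ← h1]; ring
    have key : (a - d) * d' = (a' - b') * d := by linear_combination had - d * hb
    refine hlam.pow_dvd_of_dvd_mul_right n hd₀' ?_
    rw [key]
    exact ((hmemn _ n).mp h3).mul_right d
  have hcongr_from : ∀ n : ℕ, (ζ - 1) ^ n ∣ a - d → PiCongr π n C 1 :=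
    fun n h => ⟨a, d, d, hd, hCd, one_mul _, (hmemn _ n).mpr h⟩
  -- ν ≥ 1
  have hν1 : 1 ≤ ν := by
    rcases Nat.eq_zero_or_pos ν with h0 | h
    · exfalso
      apply hexact.2
      have he : ν + 1 = 1 := by omega
      rw [he]; exact hC1
    · exact h
  -- exact divisibility
  obtain ⟨h, hh⟩ := hcongr_to ν hexact.1
  have hhnd : ¬ (ζ - 1) ∣ h := by
    intro hdvd
    apply hexact.2
    apply hcongr_from
    rw [hh, pow_succ]
    exact mul_dvd_mul_left _ hdvd
  -- the Galois action on integers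
  set τ : 𝓞 K →+* 𝓞 K := RingOfIntegers.mapRingHom σ with hτdef
  have hι : ∀ x : 𝓞 K, algebraMap (𝓞 K) K (τ x) = σ (algebraMap (𝓞 K) K x) := fun _ => rfl
  have hτζ : τ ζ = ζ ^ u := by
    apply hinj
    rw [hι, hσζ, map_pow]
  -- the key divisibility from the σ-congruence
  obtain ⟨a', b', d', hd₀, h1, h2, h3⟩ := hσC
  have hd₀' : ¬ (ζ - 1) ∣ d' := fun hx => hd₀ ((hmem1 d').mpr hx)
  have hE1 : a' * τ d = τ a * d' := by
    have e1 : (σ C) * (algebraMap (𝓞 K) K (τ d)) = algebraMap (𝓞 K) K (τ a) := by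
      rw [hι, hι, ← map_mul, hCd]
    apply hinj
    rw [map_mul, map_mul, ← h1, ← e1]; ring
  have hE2 : b' * d ^ (m + 1) = a ^ (m + 1) * d' := by
    have e2 : C ^ (m + 1) * algebraMap (𝓞 K) K (d ^ (m + 1))
        = algebraMap (𝓞 K) K (a ^ (m + 1)) := by
      rw [map_pow, map_pow, ← mul_pow, hCd]
    apply hinj
    rw [map_mul, map_mul, ← h2, ← e2]; ring
  have hE : (ζ - 1) ^ (ν + 1) ∣ τ a * d ^ (m + 1) - a ^ (m + 1) * τ d := by
    have h3' : (ζ - 1) ^ ((p : ℕ) + 1) ∣ a' - b' := (hmemn _ _).mp h3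
    have hkey : (τ a * d ^ (m + 1) - a ^ (m + 1) * τ d) * d'
        = (a' - b') * (τ d * d ^ (m + 1)) := by
      linear_combination (-(d ^ (m + 1))) * hE1 + τ d * hE2
    have hdd : (ζ - 1) ^ ((p : ℕ) + 1) ∣ τ a * d ^ (m + 1) - a ^ (m + 1) * τ d := by
      refine hlam.pow_dvd_of_dvd_mul_right _ hd₀' ?_
      rw [hkey]
      exact h3'.mul_right _
    exact (pow_dvd_pow (ζ - 1) (by omega : ν + 1 ≤ (p : ℕ) + 1)).trans hdd
  -- congruence properties of τ
  have hτl2 : (ζ - 1) ^ 2 ∣ τ (ζ - 1) - (u : 𝓞 K) * (ζ - 1) := by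
    have : τ (ζ - 1) = ζ ^ u - 1 := by rw [map_sub, map_one, hτζ]
    rw [this]
    exact aux_pow_one_sub ζ u
  have hτl1 : (ζ - 1) ∣ τ (ζ - 1) := by
    have he : τ (ζ - 1) = (τ (ζ - 1) - (u : 𝓞 K) * (ζ - 1)) + (u : 𝓞 K) * (ζ - 1) := by ring
    rw [he]
    exact dvd_add ((dvd_pow_self (ζ - 1) two_ne_zero).trans hτl2) (dvd_mul_left _ _)
  have hTW : (ζ - 1) ^ (ν + 1) ∣ (τ (ζ - 1)) ^ ν - (u : 𝓞 K) ^ ν * (ζ - 1) ^ ν := by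
    have := aux_pow_diff _ _ _ hτl2 hτl1 (dvd_mul_left _ _) ν
    rwa [mul_pow] at this
  have hτsub : ∀ x : 𝓞 K, (ζ - 1) ∣ τ x - x := by
    intro x
    obtain ⟨n, hn⟩ := hres x
    obtain ⟨k, hk⟩ := hn
    have h1' : τ x - (n : 𝓞 K) = τ (ζ - 1) * τ k := by
      have hτk := congrArg τ hk
      rw [map_sub, map_intCast, map_mul] at hτk
      exact hτk
    have he : τ x - x = (τ x - (n : 𝓞 K)) - (x - (n : 𝓞 K)) := by ring
    rw [he, h1', hk]
    exact dvd_sub (hτl1.mul_right _) (dvd_mul_right _ _)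
  -- the expansion of the key divisibility
  have haeq : a = d + (ζ - 1) ^ ν * h := by linear_combination hh
  have eq1 : τ a = τ d + (τ (ζ - 1)) ^ ν * τ h := by
    rw [haeq, map_add, map_mul, map_pow]
  obtain ⟨s, hs⟩ := aux_binom d ((ζ - 1) ^ ν * h) m
  have eq2 : a ^ (m + 1) = d ^ (m + 1) + ((m : 𝓞 K) + 1) * d ^ m * ((ζ - 1) ^ ν * h)
      + ((ζ - 1) ^ ν * h) ^ 2 * s := by rw [haeq, hs]
  rw [eq1, eq2] at hE
  have hF : (ζ - 1) ^ (ν + 1)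
      ∣ (ζ - 1) ^ ν * (h * (d ^ m * d) * ((u : 𝓞 K) ^ ν - ((m : 𝓞 K) + 1))) := by
    have hid : (ζ - 1) ^ ν * (h * (d ^ m * d) * ((u : 𝓞 K) ^ ν - ((m : 𝓞 K) + 1)))
        = ((τ d + (τ (ζ - 1)) ^ ν * τ h) * d ^ (m + 1)
            - (d ^ (m + 1) + ((m : 𝓞 K) + 1) * d ^ m * ((ζ - 1) ^ ν * h)
              + ((ζ - 1) ^ ν * h) ^ 2 * s) * τ d)
          - ((((τ (ζ - 1)) ^ ν - (u : 𝓞 K) ^ ν * (ζ - 1) ^ ν) * (τ h * d ^ (m + 1))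
            + ((u : 𝓞 K) ^ ν * (ζ - 1) ^ ν) * ((τ h - h) * d ^ (m + 1))
            + (((m : 𝓞 K) + 1) * d ^ m * (ζ - 1) ^ ν * h) * (d - τ d))
            - ((ζ - 1) ^ ν * (ζ - 1) ^ ν) * (h ^ 2 * s * τ d)) := by ring
    rw [hid]
    refine dvd_sub hE (dvd_sub (dvd_add (dvd_add ?_ ?_) ?_) ?_)
    · exact hTW.mul_right _
    · rw [pow_succ]
      exact mul_dvd_mul (dvd_mul_left _ _) ((hτsub h).mul_right _)
    · rw [pow_succ]
      refine mul_dvd_mul ⟨((m : 𝓞 K) + 1) * d ^ m * h, by ring⟩ ?_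
      exact (dvd_sub_comm).mp (hτsub d)
    · refine dvd_mul_of_dvd_left ?_ _
      rw [← pow_add]
      exact pow_dvd_pow (ζ - 1) (by omega)
  rw [pow_succ] at hF
  have hl0 : (ζ - 1) ^ ν ≠ 0 := pow_ne_zero ν hlam.ne_zero
  have hdiv : (ζ - 1) ∣ h * (d ^ m * d) * ((u : 𝓞 K) ^ ν - ((m : 𝓞 K) + 1)) :=
    (mul_dvd_mul_iff_left hl0).mp hF
  have hsub : (ζ - 1) ∣ (u : 𝓞 K) ^ ν - ((m : 𝓞 K) + 1) := by
    rcases (hlam.dvd_mul.mp hdiv) with hx | hx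
    · exfalso
      rcases (hlam.dvd_mul.mp hx) with hy | hy
      · exact hhnd hy
      · rcases (hlam.dvd_mul.mp hy) with hz | hz
        · exact hd' (hlam.dvd_of_dvd_pow hz)
        · exact hd' hz
    · exact hx
  have hcast : (((u : ℤ) ^ ν - ((m : ℤ) + 1) : ℤ) : 𝓞 K)
      = (u : 𝓞 K) ^ ν - ((m : 𝓞 K) + 1) := by push_cast; ring
  have hpdvd : (p : ℤ) ∣ ((u : ℤ) ^ ν - ((m : ℤ) + 1)) := by
    apply hint
    rw [hcast]
    exact hsub
  have hz := (ZMod.intCast_zmod_eq_zero_iff_dvd _ (p : ℕ)).mpr hpdvd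
  push_cast at hz
  push_cast
  linear_combination hz
end

section
/- Let p be an odd prime, ζ a primitive p-th root of unity, σ: ζ ↦ ζ^u for a primitive root u mod p, and π = (ζ-1)ℤ[ζ]. If B is a singular integer (B·ℤ[ζ] = 𝔟^p for a non-principal ideal 𝔟) with σ(B) = B^μ·α^p for some α ∈ ℚ(ζ) of π-valuation 0 and μ ≡ u^m (mod p) with 1 ≤ m ≤ p-2, and B ≡ 1 (mod π), then π^m divides B - 1. -/
open NumberField

lemma one_add_pow_eq {R : Type*} [CommRing R] (y : R) (n : ℕ) :
    ∃ t : R, (1 + y) ^ n = 1 + n * y + y ^ 2 * t := by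
  induction n with
  | zero => exact ⟨0, by simp⟩
  | succ n ih =>
    obtain ⟨t, ht⟩ := ih
    exact ⟨t + n + y * t, by rw [pow_succ, ht]; push_cast; ring⟩

lemma exists_int_sub_dvd (p : ℕ+) (hp : (p : ℕ).Prime) {K : Type*} [Field K] [NumberField K]
    [IsCyclotomicExtension {(p : ℕ)} ℚ K] (ζ : 𝓞 K) (hζ : IsPrimitiveRoot ζ (p : ℕ))
    (x : 𝓞 K) : ∃ r : ℤ, (ζ - 1) ∣ x - (r : 𝓞 K) := by
  haveI := Fact.mk hp
  set f := algebraMap (𝓞 K) K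
  have hinj : Function.Injective f := RingOfIntegers.coe_injective
  have hζK : IsPrimitiveRoot (f ζ) (p : ℕ) := hζ.map_of_injective hinj
  have hic : IsIntegralClosure (Algebra.adjoin ℤ ({f ζ} : Set K)) ℤ K :=
    IsCyclotomicExtension.Rat.isIntegralClosure_adjoin_singleton_of_prime hζK
  have hxint : IsIntegral ℤ (f x) := x.2
  have hmem : f x ∈ Algebra.adjoin ℤ ({f ζ} : Set K) := by
    obtain ⟨y, hy⟩ := (IsIntegralClosure.isIntegral_iff
      (A := Algebra.adjoin ℤ ({f ζ} : Set K)) (R := ℤ) (B := K)).mp hxint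
    rw [← hy]; exact y.2
  have main : ∀ z ∈ Algebra.adjoin ℤ ({f ζ} : Set K),
      ∃ (r : ℤ) (c : 𝓞 K), z = (r : K) + (f ζ - 1) * f c := by
    intro z hz
    induction hz using Algebra.adjoin_induction with
    | mem w hw =>
      rcases hw with rfl
      exact ⟨1, 1, by simp⟩
    | algebraMap r => exact ⟨r, 0, by simp⟩
    | add z₁ z₂ h₁ h₂ ih₁ ih₂ =>
      obtain ⟨r₁, c₁, e₁⟩ := ih₁; obtain ⟨r₂, c₂, e₂⟩ := ih₂
      exact ⟨r₁ + r₂, c₁ + c₂, by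
        rw [e₁, e₂]; simp only [map_add, map_mul, map_intCast]; push_cast; ring⟩
    | mul z₁ z₂ h₁ h₂ ih₁ ih₂ =>
      obtain ⟨r₁, c₁, e₁⟩ := ih₁; obtain ⟨r₂, c₂, e₂⟩ := ih₂
      refine ⟨r₁ * r₂, r₁ • c₂ + r₂ • c₁ + (ζ - 1) * (c₁ * c₂), ?_⟩
      rw [e₁, e₂]
      simp only [map_add, map_mul, map_intCast, map_sub, map_one, zsmul_eq_mul]
      push_cast
      ring
  obtain ⟨r, c, hc⟩ := main (f x) hmem
  refine ⟨r, c, hinj ?_⟩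
  rw [map_mul, map_sub, map_sub, map_one, map_intCast, hc]
  ring

/-- If `B` is a singular integer (`B·ℤ[ζ] = 𝔟^p` with `𝔟` non-principal),
`σ(B) = B^μ·α^p` with `α ∈ ℚ(ζ)` of `π`-valuation `0`, `μ ≡ u^m (mod p)` with
`1 ≤ m ≤ p-2`, and `B ≡ 1 (mod π)`, then `π^m` divides `B - 1`. -/
theorem stmt8 (p : ℕ+) (hp : (p : ℕ).Prime) (hodd : Odd (p : ℕ))
    (u : ℕ) (hu : orderOf (u : ZMod (p : ℕ)) = (p : ℕ) - 1)
    {K : Type*} [Field K] [NumberField K] [IsCyclotomicExtension {(p : ℕ)} ℚ K]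
    (ζ : 𝓞 K) (hζ : IsPrimitiveRoot ζ (p : ℕ))
    (σ : K ≃ₐ[ℚ] K) (hσζ : σ (algebraMap (𝓞 K) K ζ) = (algebraMap (𝓞 K) K ζ) ^ u)
    (π : Ideal (𝓞 K)) (hπ : π = Ideal.span {ζ - 1})
    (B : 𝓞 K) (𝔟 : Ideal (𝓞 K)) (h𝔟 : ¬ 𝔟.IsPrincipal) (h𝔟π : 𝔟 ⊔ π = ⊤)
    (hB : Ideal.span {B} = 𝔟 ^ (p : ℕ))
    (μ m : ℕ) (hm1 : 1 ≤ m) (hm2 : m ≤ (p : ℕ) - 2)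
    (hμ : (μ : ZMod (p : ℕ)) = (u : ZMod (p : ℕ)) ^ m)
    (α : K) (hα : PiValZero π α)
    (hσB : σ (algebraMap (𝓞 K) K B) = (algebraMap (𝓞 K) K B) ^ μ * α ^ (p : ℕ))
    (hB1 : B - 1 ∈ π) :
    B - 1 ∈ π ^ m := by
  classical
  subst hπ
  haveI := Fact.mk hp
  have hinj : Function.Injective (algebraMap (𝓞 K) K) := RingOfIntegers.coe_injective
  obtain ⟨a, d, haπ, hdπ, had⟩ := hα
  rw [Ideal.span_singleton_pow, Ideal.mem_span_singleton]
  rw [Ideal.mem_span_singleton] at hB1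
  set l : 𝓞 K := ζ - 1 with hldef
  -- p ≥ 3
  have hp3 : 3 ≤ (p : ℕ) := by
    have h2 := hp.two_le
    rcases Nat.lt_or_ge (p : ℕ) 3 with h | h
    · have : (p : ℕ) = 2 := by omega
      rw [this] at hodd
      simp [Nat.odd_iff] at hodd
    · exact h
  -- l is prime
  have hζK : IsPrimitiveRoot (algebraMap (𝓞 K) K ζ) (p : ℕ) := hζ.map_of_injective hinj
  have hprime : Prime l := by
    have h := hζK.zeta_sub_one_prime'
    have he : hζK.toInteger = ζ := by ext; rfl
    rwa [he] at h
  have hlne : l ≠ 0 := hprime.ne_zero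
  -- l^(p-1) ∣ p
  have hl_pow_dvd : l ^ ((p : ℕ) - 1) ∣ ((p : ℕ) : 𝓞 K) := by
    obtain ⟨z, _, hzeq⟩ := hζ.self_sub_one_pow_dvd_order
      (k := (p : ℕ) - 1) (by omega)
    exact ⟨z, by rw [hzeq]; ring⟩
  have hl_dvd_p : l ∣ ((p : ℕ) : 𝓞 K) :=
    dvd_trans (dvd_pow_self l (by omega : (p : ℕ) - 1 ≠ 0)) hl_pow_dvd
  -- l ∣ cast of integer k implies p ∣ k
  have hint_dvd : ∀ k : ℤ, l ∣ (k : 𝓞 K) → ((p : ℕ) : ℤ) ∣ k := by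
    intro k hk
    by_contra hnk
    have hcop : IsCoprime (((p : ℕ) : ℤ)) k := by
      rw [Int.isCoprime_iff_gcd_eq_one]
      rcases Nat.coprime_or_dvd_of_prime hp k.natAbs with h | h
      · simpa [Int.gcd] using h
      · exact absurd (Int.natCast_dvd.mpr h) hnk
    obtain ⟨x, y, hxy⟩ := hcop
    have h1 : (1 : 𝓞 K) = x * ((p : ℕ) : 𝓞 K) + y * (k : 𝓞 K) := by
      have := congrArg (fun z : ℤ => (z : 𝓞 K)) hxy
      push_cast at this
      exact this.symm
    have : l ∣ (1 : 𝓞 K) := by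
      rw [h1]
      exact dvd_add (Dvd.dvd.mul_left hl_dvd_p x) (Dvd.dvd.mul_left hk y)
    exact hprime.not_unit (isUnit_of_dvd_one this)
  -- not divisible: extract the exact power n
  by_contra hcon
  have hex : ∃ j, ¬ l ^ (j + 1) ∣ B - 1 := ⟨m - 1, by rwa [Nat.sub_add_cancel hm1]⟩
  set n := Nat.find hex with hn
  have hnspec : ¬ l ^ (n + 1) ∣ B - 1 := Nat.find_spec hex
  have hnmin : ∀ i < n, l ^ (i + 1) ∣ B - 1 := fun i hi => not_not.mp (Nat.find_min hex hi)
  have hn1 : 1 ≤ n := by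
    rcases Nat.eq_zero_or_pos n with h | h
    · exact absurd (by simpa using hB1) (h ▸ hnspec)
    · exact h
  have hndvd : l ^ n ∣ B - 1 := by
    have := hnmin (n - 1) (by omega)
    rwa [Nat.sub_add_cancel hn1] at this
  have hnm : n < m := by
    by_contra h
    push_neg at h
    exact hcon (dvd_trans (pow_dvd_pow l h) hndvd)
  obtain ⟨c, hc⟩ := hndvd
  have hcl : ¬ l ∣ c := by
    rintro ⟨e, he⟩
    exact hnspec ⟨e, by rw [hc, he, pow_succ]; ring⟩
  -- Galois action on the ring of integers
  set σO := galRestrict ℤ ℚ K (𝓞 K) σ with hσOdef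
  have hσmap : ∀ x : 𝓞 K, algebraMap (𝓞 K) K (σO x) = σ (algebraMap (𝓞 K) K x) :=
    fun x => algebraMap_galRestrict_apply ℤ σ x
  have heq : σO B * d ^ (p : ℕ) = B ^ μ * a ^ (p : ℕ) := by
    apply hinj
    have h2 : (α * algebraMap (𝓞 K) K d) ^ (p : ℕ)
        = (algebraMap (𝓞 K) K a) ^ (p : ℕ) := by rw [had]
    rw [mul_pow] at h2
    push_cast [map_mul, map_pow, hσmap, hσB]
    calc (algebraMap (𝓞 K) K B) ^ μ * α ^ (p : ℕ) * (algebraMap (𝓞 K) K d) ^ (p : ℕ)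
        = (algebraMap (𝓞 K) K B) ^ μ *
            (α ^ (p : ℕ) * (algebraMap (𝓞 K) K d) ^ (p : ℕ)) := by ring
      _ = (algebraMap (𝓞 K) K B) ^ μ * (algebraMap (𝓞 K) K a) ^ (p : ℕ) := by rw [h2]
  -- σO ζ = ζ ^ u and expansion of σO l
  have hσζO : σO ζ = ζ ^ u := hinj (by rw [hσmap, hσζ, map_pow])
  obtain ⟨t, ht⟩ := one_add_pow_eq (R := 𝓞 K) l u
  have hζeq : ζ = 1 + l := by rw [hldef]; ring
  have hσl : σO l = (u : 𝓞 K) * l + l ^ 2 * t := by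
    have h1 : σO l = ζ ^ u - 1 := by
      rw [hldef, map_sub, map_one, hσζO]
    rw [h1, hζeq, ht]; ring
  -- σO c = c + l * w
  obtain ⟨rc, hrc⟩ := exists_int_sub_dvd p hp ζ hζ c
  have hwdvd : l ∣ σO c - c := by
    obtain ⟨ec, hec⟩ := hrc
    have h2 : σO c - (rc : 𝓞 K) = σO l * σO ec := by
      rw [← map_mul, ← hec, map_sub, map_intCast]
    have h3 : l ∣ σO c - (rc : 𝓞 K) := by
      rw [h2, hσl]; exact ⟨((u : 𝓞 K) + l * t) * σO ec, by ring⟩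
    have h4 : σO c - c = (σO c - (rc : 𝓞 K)) - (c - (rc : 𝓞 K)) := by ring
    rw [h4]
    exact dvd_sub h3 ⟨ec, hec⟩
  obtain ⟨w, hwe⟩ := hwdvd
  -- (u + l t)^n = u^n + l s
  obtain ⟨s, hs⟩ : l ∣ ((u : 𝓞 K) + l * t) ^ n - (u : 𝓞 K) ^ n :=
    dvd_trans ⟨t, by ring⟩ (sub_dvd_pow_sub_pow _ _ n)
  -- expansion of σO B
  have hBrw : B = 1 + l ^ n * c := by linear_combination hc
  have hσBeq : σO B = 1 + l ^ n * (((u : 𝓞 K) ^ n + l * s) * (c + l * w)) := by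
    have h1 : σO B = 1 + (σO l) ^ n * σO c := by
      rw [hBrw, map_add, map_one, map_mul, map_pow]
    have h2 : (σO l) ^ n = l ^ n * ((u : 𝓞 K) ^ n + l * s) := by
      have h3 : σO l = l * ((u : 𝓞 K) + l * t) := by rw [hσl]; ring
      rw [h3, mul_pow]
      linear_combination (l ^ n) * hs
    have h3 : σO c = c + l * w := by linear_combination hwe
    rw [h1, h2, h3]; ring
  -- expansion of B ^ μ
  obtain ⟨t₂, ht₂⟩ := one_add_pow_eq (R := 𝓞 K) (l ^ n * c) μ
  have hBμ : B ^ μ = 1 + (μ : 𝓞 K) * (l ^ n * c) + (l ^ n * c) ^ 2 * t₂ := by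
    rw [hBrw]; exact ht₂
  -- integer approximations of a and d
  obtain ⟨ra, hra⟩ := exists_int_sub_dvd p hp ζ hζ a
  obtain ⟨rd, hrd⟩ := exists_int_sub_dvd p hp ζ hζ d
  have hla : ¬ l ∣ a := fun h => haπ (Ideal.mem_span_singleton.mpr h)
  have hld : ¬ l ∣ d := fun h => hdπ (Ideal.mem_span_singleton.mpr h)
  have hcast : ∀ k : ℤ, ((p : ℕ) : ℤ) ∣ k → l ∣ (k : 𝓞 K) := by
    intro k hk
    obtain ⟨q, hq⟩ := hk
    have : (k : 𝓞 K) = ((p : ℕ) : 𝓞 K) * (q : 𝓞 K) := by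
      have := congrArg (fun z : ℤ => (z : 𝓞 K)) hq
      push_cast at this
      exact this
    rw [this]
    exact Dvd.dvd.mul_right hl_dvd_p _
  have hpa : ¬ ((p : ℕ) : ℤ) ∣ ra := by
    intro hdvd
    apply hla
    have h1 : l ∣ (ra : 𝓞 K) := hcast ra hdvd
    have h2 : a = (a - (ra : 𝓞 K)) + (ra : 𝓞 K) := by ring
    rw [h2]
    exact dvd_add hra h1
  have hpd : ¬ ((p : ℕ) : ℤ) ∣ rd := by
    intro hdvd
    apply hld
    have h1 : l ∣ (rd : 𝓞 K) := hcast rd hdvd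
    have h2 : d = (d - (rd : 𝓞 K)) + (rd : 𝓞 K) := by ring
    rw [h2]
    exact dvd_add hrd h1
  -- Fermat quotient congruence
  have hfresh : ∀ (x : 𝓞 K) (r : ℤ), l ∣ x - (r : 𝓞 K) →
      l ^ (n + 1) ∣ x ^ (p : ℕ) - (r : 𝓞 K) := by
    intro x r hxr
    have hle : n + 1 ≤ (p : ℕ) - 1 := by omega
    refine dvd_trans (pow_dvd_pow l hle) ?_
    obtain ⟨e, he⟩ := hxr
    obtain ⟨s', hs'⟩ : ∃ s' : 𝓞 K, ((r : 𝓞 K) + l * e) ^ (p : ℕ)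
        = (r : 𝓞 K) ^ (p : ℕ) + (l * e) ^ (p : ℕ) + ((p : ℕ) : 𝓞 K) * s' := by
      obtain ⟨s0, h0⟩ := exists_add_pow_prime_eq hp ((r : 𝓞 K)) (l * e)
      exact ⟨(r : 𝓞 K) * (l * e) * s0, by rw [h0]; ring⟩
    have hx : x = (r : 𝓞 K) + l * e := by linear_combination he
    have h1 : ((p : ℕ) : ℤ) ∣ r ^ (p : ℕ) - r := by
      rw [← ZMod.intCast_zmod_eq_zero_iff_dvd]
      push_cast
      rw [ZMod.pow_card]
      ring
    obtain ⟨q, hq⟩ := h1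
    obtain ⟨z, hz⟩ := hl_pow_dvd
    have hq' : ((r : 𝓞 K)) ^ (p : ℕ) - (r : 𝓞 K) = ((p : ℕ) : 𝓞 K) * (q : 𝓞 K) := by
      have := congrArg (fun z : ℤ => (z : 𝓞 K)) hq
      push_cast at this
      exact this
    refine ⟨z * ((q : 𝓞 K) + s') + l * e ^ (p : ℕ), ?_⟩
    have hpow : l ^ (p : ℕ) = l ^ ((p : ℕ) - 1) * l := by
      rw [← pow_succ]
      congr 1
      omega
    rw [hx, hs', mul_pow, hpow]
    linear_combination hq' + ((q : 𝓞 K) + s') * hz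
  obtain ⟨A, hA⟩ := hfresh a ra hra
  obtain ⟨D, hD⟩ := hfresh d rd hrd
  -- the key congruence
  obtain ⟨k, hk⟩ : ∃ k, n = k + 1 := ⟨n - 1, by omega⟩
  have hln : l ^ n = l ^ k * l := by rw [hk, pow_succ]
  have hln1 : l ^ (n + 1) = l ^ k * l * l := by rw [hk, pow_succ, pow_succ]
  set U : 𝓞 K := (u : 𝓞 K) ^ n with hU
  set Z : 𝓞 K := -D - (U * w + s * c + l * s * w) * rd
      - l ^ k * l * (U + l * s) * (c + l * w) * D + A + (μ : 𝓞 K) * (l ^ k * l) * c * A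
      + l ^ k * c ^ 2 * t₂ * ra + (l ^ k) ^ 2 * l ^ 2 * c ^ 2 * t₂ * A with hZ
  have key : ((rd : 𝓞 K) - ra) + (l ^ k * l) * c * (U * rd - (μ : 𝓞 K) * ra)
      = (l ^ k * l * l) * Z := by
    have e1 := heq
    rw [hσBeq, hBμ] at e1
    have ha' : a ^ (p : ℕ) = (ra : 𝓞 K) + l ^ (n + 1) * A := by linear_combination hA
    have hd' : d ^ (p : ℕ) = (rd : 𝓞 K) + l ^ (n + 1) * D := by linear_combination hD
    rw [ha', hd', hln1, hln] at e1
    rw [hZ, hU]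
    linear_combination e1
  -- first conclusion: p ∣ rd - ra
  have h5 : l ∣ ((rd : 𝓞 K) - ra) := by
    have h6 : ((rd : 𝓞 K) - ra) = (l ^ k * l * l) * Z
        - (l ^ k * l) * c * (U * rd - (μ : 𝓞 K) * ra) := by linear_combination key
    rw [h6]
    exact dvd_sub ⟨l ^ k * l * Z, by ring⟩ ⟨l ^ k * c * (U * rd - (μ : 𝓞 K) * ra), by ring⟩
  have h6 : ((p : ℕ) : ℤ) ∣ rd - ra := by
    apply hint_dvd
    push_cast
    exact h5
  have h7 : l ^ k * l * l ∣ ((rd : 𝓞 K) - ra) := by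
    obtain ⟨q, hq⟩ := h6
    have heqc : ((rd : 𝓞 K) - ra) = ((p : ℕ) : 𝓞 K) * (q : 𝓞 K) := by
      have := congrArg (fun z : ℤ => (z : 𝓞 K)) hq
      push_cast at this
      exact this
    rw [heqc]
    have h8 : l ^ (n + 1) ∣ ((p : ℕ) : 𝓞 K) :=
      dvd_trans (pow_dvd_pow l (by omega : n + 1 ≤ (p : ℕ) - 1)) hl_pow_dvd
    rw [hln1] at h8
    exact Dvd.dvd.mul_right h8 _
  have h8 : l ^ k * l * l ∣ (l ^ k * l) * (c * (U * rd - (μ : 𝓞 K) * ra)) := by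
    have h9 : (l ^ k * l) * (c * (U * rd - (μ : 𝓞 K) * ra))
        = (l ^ k * l * l) * Z - ((rd : 𝓞 K) - ra) := by linear_combination key
    rw [h9]
    exact dvd_sub ⟨Z, rfl⟩ h7
  have h9 : l ∣ c * (U * rd - (μ : 𝓞 K) * ra) := by
    have hne : l ^ k * l ≠ 0 := mul_ne_zero (pow_ne_zero k hlne) hlne
    obtain ⟨q, hq⟩ := h8
    exact ⟨q, mul_left_cancel₀ hne (by linear_combination hq)⟩
  have h10 : l ∣ (U * rd - (μ : 𝓞 K) * ra) := (hprime.dvd_mul.mp h9).resolve_left hcl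
  have h11 : ((p : ℕ) : ℤ) ∣ (u : ℤ) ^ n * rd - (μ : ℤ) * ra := by
    apply hint_dvd
    have : (((u : ℤ) ^ n * rd - (μ : ℤ) * ra : ℤ) : 𝓞 K) = U * rd - (μ : 𝓞 K) * ra := by
      rw [hU]; push_cast; ring
    rw [this]
    exact h10
  -- pass to ZMod p
  have hq1 : ((u : ZMod (p : ℕ))) ^ n * (rd : ZMod (p : ℕ))
      = (μ : ZMod (p : ℕ)) * (ra : ZMod (p : ℕ)) := by
    have h12 := (ZMod.intCast_zmod_eq_zero_iff_dvd _ (p : ℕ)).mpr h11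
    push_cast at h12
    linear_combination h12
  have hq2 : (rd : ZMod (p : ℕ)) = (ra : ZMod (p : ℕ)) := by
    have h12 := (ZMod.intCast_zmod_eq_zero_iff_dvd _ (p : ℕ)).mpr h6
    push_cast at h12
    linear_combination h12
  have hrd0 : (rd : ZMod (p : ℕ)) ≠ 0 := by
    rw [Ne, ZMod.intCast_zmod_eq_zero_iff_dvd]
    exact hpd
  have hun : ((u : ZMod (p : ℕ))) ^ n = ((u : ZMod (p : ℕ))) ^ m := by
    have h13 : ((u : ZMod (p : ℕ))) ^ n * (rd : ZMod (p : ℕ))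
        = ((u : ZMod (p : ℕ))) ^ m * (rd : ZMod (p : ℕ)) := by
      rw [hq1, hq2, hμ]
    exact mul_right_cancel₀ hrd0 h13
  have hu0 : (u : ZMod (p : ℕ)) ≠ 0 := by
    intro h0
    have h1 : ((u : ZMod (p : ℕ))) ^ ((p : ℕ) - 1) = 1 := by
      rw [← hu]; exact pow_orderOf_eq_one _
    rw [h0, zero_pow (by omega : (p : ℕ) - 1 ≠ 0)] at h1
    exact zero_ne_one h1
  have hmn1 : ((u : ZMod (p : ℕ))) ^ (m - n) = 1 := by
    have h2 : ((u : ZMod (p : ℕ))) ^ n * ((u : ZMod (p : ℕ))) ^ (m - n)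
        = ((u : ZMod (p : ℕ))) ^ n * 1 := by
      rw [mul_one, ← pow_add, show n + (m - n) = m from by omega, ← hun]
    exact mul_left_cancel₀ (pow_ne_zero n hu0) h2
  have hdvd_ord : ((p : ℕ) - 1) ∣ (m - n) := hu ▸ orderOf_dvd_of_pow_eq_one hmn1
  have := Nat.le_of_dvd (by omega) hdvd_ord
  omega
end

section
/- Let p be an odd prime, u a primitive root mod p, ζ a primitive p-th root of unity, σ(ζ) = ζ^u, λ = ζ-1, π = λℤ[ζ]. Suppose V ∈ ℤ[ζ] is written V = γ + γ₀ζ + γ₁ζ^u + ⋯ + γ_{p-3}ζ^{u^{p-3}} with γ, γ_i ∈ ℤ, satisfies σ(V) ≡ μ·V (mod p·ℤ[ζ]) for μ ∈ ℤ with μ ≢ 0, 1 (mod p). Then γ ≡ -γ_{p-3}/(μ-1) (mod p), γ₀ ≡ -μ^{-1}γ_{p-3} (mod p), and γ_k ≡ -(μ^{-(k+1)} + ⋯ + μ^{-1})·γ_{p-3} (mod p) for 1 ≤ k ≤ p-4. -/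
open NumberField Finset


lemma aux_exists (p u : ℕ) (hp : p.Prime) (hu : orderOf (u : ZMod p) = p - 1) :
    ∀ x : ZMod p, x ≠ 0 → ∃ j < p - 1, (u : ZMod p) ^ j = x := by
  haveI : Fact p.Prime := ⟨hp⟩
  have hppos : 0 < p - 1 := by have := hp.two_le; omega
  have hu1 : (u : ZMod p) ^ (p - 1) = 1 := by rw [← hu]; exact pow_orderOf_eq_one _
  have hu0 : (u : ZMod p) ≠ 0 := by
    intro h
    rw [h, zero_pow (by omega)] at hu1
    exact zero_ne_one hu1
  intro x hx
  set S : Finset (ZMod p) := (Finset.range (p - 1)).image (fun j => (u : ZMod p) ^ j) with hS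
  have hinj : Set.InjOn (fun j => (u : ZMod p) ^ j) (Finset.range (p - 1) : Set ℕ) := by
    intro a ha b hb hab
    exact pow_injOn_Iio_orderOf (by simpa [hu] using ha) (by simpa [hu] using hb) hab
  have hcardS : S.card = p - 1 := by
    rw [hS, Finset.card_image_of_injOn hinj, Finset.card_range]
  have hsub : S ⊆ Finset.univ.erase 0 := by
    intro y hy
    simp only [hS, Finset.mem_image, Finset.mem_range] at hy
    obtain ⟨j, hj, rfl⟩ := hy
    exact Finset.mem_erase.2 ⟨pow_ne_zero _ hu0, Finset.mem_univ _⟩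
  have hcardE : (Finset.univ.erase (0 : ZMod p)).card = p - 1 := by
    rw [Finset.card_erase_of_mem (Finset.mem_univ _)]
    simp [ZMod.card]
  have hSE : S = Finset.univ.erase 0 := Finset.eq_of_subset_of_card_le hsub (by omega)
  have hxS : x ∈ S := by rw [hSE]; exact Finset.mem_erase.2 ⟨hx, Finset.mem_univ _⟩
  simp only [hS, Finset.mem_image, Finset.mem_range] at hxS
  obtain ⟨j, hj, h⟩ := hxS
  exact ⟨j, hj, h⟩

lemma aux_sum {R : Type*} [CommRing R] [IsDomain R] (p u : ℕ) (hp : p.Prime)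
    (hu : orderOf (u : ZMod p) = p - 1) (ζ : R) (hζ : IsPrimitiveRoot ζ p) :
    ∑ j ∈ Finset.range (p - 1), ζ ^ (u ^ j) = -1 := by
  haveI : Fact p.Prime := ⟨hp⟩
  have hp1 : 1 < p := hp.one_lt
  have hpowmod : ∀ m : ℕ, ζ ^ m = ζ ^ (m % p) := by
    intro m
    conv_lhs => rw [← Nat.div_add_mod m p]
    rw [pow_add, pow_mul, hζ.pow_eq_one, one_pow, one_mul]
  have hu0 : ∀ j : ℕ, ((u : ZMod p)) ^ j ≠ 0 := by
    have hu1 : (u : ZMod p) ^ (p - 1) = 1 := by rw [← hu]; exact pow_orderOf_eq_one _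
    have : (u : ZMod p) ≠ 0 := by
      intro h; rw [h, zero_pow (by omega)] at hu1; exact zero_ne_one hu1
    exact fun j => pow_ne_zero _ this
  have hcast : ∀ j : ℕ, ((u ^ j % p : ℕ) : ZMod p) = (u : ZMod p) ^ j := by
    intro j; rw [ZMod.natCast_mod, Nat.cast_pow]
  have hinj : Set.InjOn (fun j => u ^ j % p) (Finset.range (p - 1) : Set ℕ) := by
    intro a ha b hb hab
    have : ((u : ZMod p)) ^ a = ((u : ZMod p)) ^ b := by
      rw [← hcast, ← hcast]; exact congrArg _ hab
    exact pow_injOn_Iio_orderOf (by simpa [hu] using ha) (by simpa [hu] using hb) this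
  have himg : (Finset.range (p - 1)).image (fun j => u ^ j % p) = Finset.Ico 1 p := by
    apply Finset.eq_of_subset_of_card_le
    · intro a ha
      simp only [Finset.mem_image, Finset.mem_range] at ha
      obtain ⟨j, hj, rfl⟩ := ha
      rw [Finset.mem_Ico]
      constructor
      · rcases Nat.eq_zero_or_pos (u ^ j % p) with h | h
        · exfalso; apply hu0 j; rw [← hcast, h, Nat.cast_zero]
        · exact h
      · exact Nat.mod_lt _ (by omega)
    · rw [Nat.card_Ico, Finset.card_image_of_injOn hinj, Finset.card_range]
  have key : ∑ j ∈ Finset.range (p - 1), ζ ^ (u ^ j) = ∑ a ∈ Finset.Ico 1 p, ζ ^ a := by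
    rw [← himg, Finset.sum_image (fun a ha b hb => hinj ha hb)]
    exact Finset.sum_congr rfl fun j _ => hpowmod _
  rw [key]
  have h0 : ∑ a ∈ Finset.range p, ζ ^ a = 0 := hζ.geom_sum_eq_zero hp1
  rw [Finset.range_eq_Ico, Finset.sum_eq_sum_Ico_succ_bot (by omega : 0 < p)] at h0
  simp only [pow_zero, Nat.zero_add] at h0
  linear_combination h0

lemma aux_span (A : Type*) {R : Type*} [CommRing A] [CommRing R] [IsDomain R] [Algebra A R]
    (p u : ℕ) (hp : p.Prime) (hu : orderOf (u : ZMod p) = p - 1)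
    (ζ : R) (hζ : IsPrimitiveRoot ζ p) (m : ℕ) :
    ζ ^ m ∈ Submodule.span A
      (Set.range (Fin.cons 1 (fun i : Fin (p - 2) => ζ ^ u ^ (i : ℕ)) : Fin (p - 2 + 1) → R)) := by
  haveI : Fact p.Prime := ⟨hp⟩
  have hp1 : 1 < p := hp.one_lt
  set v : Fin (p - 2 + 1) → R := Fin.cons 1 (fun i : Fin (p - 2) => ζ ^ u ^ (i : ℕ)) with hv
  have h1mem : (1 : R) ∈ Submodule.span A (Set.range v) :=
    Submodule.subset_span ⟨0, by simp [hv]⟩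
  have hmem : ∀ j, j < p - 2 → ζ ^ (u ^ j) ∈ Submodule.span A (Set.range v) := by
    intro j hj
    refine Submodule.subset_span ⟨(⟨j, hj⟩ : Fin (p - 2)).succ, ?_⟩
    rw [hv, Fin.cons_succ]
  have hpowmod : ∀ k : ℕ, ζ ^ k = ζ ^ (k % p) := by
    intro k
    conv_lhs => rw [← Nat.div_add_mod k p]
    rw [pow_add, pow_mul, hζ.pow_eq_one, one_pow, one_mul]
  by_cases h0 : (m : ZMod p) = 0
  · obtain ⟨t, rfl⟩ := (ZMod.natCast_eq_zero_iff m p).1 h0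
    rw [pow_mul, hζ.pow_eq_one, one_pow]
    exact h1mem
  · obtain ⟨j, hj, hjeq⟩ := aux_exists p u hp hu (m : ZMod p) h0
    have hmj : ζ ^ m = ζ ^ (u ^ j) := by
      rw [hpowmod m, hpowmod (u ^ j)]
      have : ((u ^ j : ℕ) : ZMod p) = ((m : ℕ) : ZMod p) := by rw [Nat.cast_pow]; exact hjeq
      have h2 := (ZMod.natCast_eq_natCast_iff _ _ _).1 this
      unfold Nat.ModEq at h2
      rw [h2]
    rw [hmj]
    rcases lt_or_ge j (p - 2) with hlt | hge
    · exact hmem j hlt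
    · have hj2 : j = p - 2 := by omega
      subst hj2
      have hsum := aux_sum p u hp hu ζ hζ
      rw [show p - 1 = (p - 2) + 1 by omega, Finset.sum_range_succ] at hsum
      have hval : ζ ^ (u ^ (p - 2)) = -1 - ∑ i ∈ Finset.range (p - 2), ζ ^ (u ^ i) := by
        linear_combination hsum
      rw [hval]
      refine Submodule.sub_mem _ (Submodule.neg_mem _ h1mem) ?_
      exact Submodule.sum_mem _ fun i hi => hmem i (Finset.mem_range.1 hi)

/-- If `V = γ + γ₀ζ + γ₁ζ^u + ⋯ + γ_{p-3}ζ^{u^{p-3}}` with integer coefficients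
satisfies `σ(V) ≡ μ·V (mod p·ℤ[ζ])` with `μ ≢ 0, 1 (mod p)`, then
`γ ≡ -γ_{p-3}/(μ-1)`, `γ₀ ≡ -μ⁻¹·γ_{p-3}`, and
`γ_k ≡ -(μ^{-(k+1)} + ⋯ + μ⁻¹)·γ_{p-3} (mod p)` for `1 ≤ k ≤ p-4`. -/
theorem stmt9 (p : ℕ+) (hp : (p : ℕ).Prime) (hodd : Odd (p : ℕ))
    (u : ℕ) (hu : orderOf (u : ZMod (p : ℕ)) = (p : ℕ) - 1)
    {K : Type*} [Field K] [NumberField K] [IsCyclotomicExtension {(p : ℕ)} ℚ K]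
    (ζ : 𝓞 K) (hζ : IsPrimitiveRoot ζ (p : ℕ))
    (σ : 𝓞 K ≃+* 𝓞 K) (hσζ : σ ζ = ζ ^ u)
    (μ : ℤ) (hμ0 : (μ : ZMod (p : ℕ)) ≠ 0) (hμ1 : (μ : ZMod (p : ℕ)) ≠ 1)
    (γ : ℤ) (g : ℕ → ℤ) (V : 𝓞 K)
    (hV : V = (γ : 𝓞 K) + ∑ i ∈ Finset.range ((p : ℕ) - 2), (g i : 𝓞 K) * ζ ^ (u ^ i))
    (hcong : σ V - (μ : 𝓞 K) * V ∈ Ideal.span {((p : ℕ) : 𝓞 K)}) :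
    ((γ : ZMod (p : ℕ)) * ((μ : ZMod (p : ℕ)) - 1) = -(g ((p : ℕ) - 3) : ZMod (p : ℕ))) ∧
    ((g 0 : ZMod (p : ℕ)) = -((μ : ZMod (p : ℕ))⁻¹) * (g ((p : ℕ) - 3) : ZMod (p : ℕ))) ∧
    (∀ k : ℕ, 1 ≤ k → k ≤ (p : ℕ) - 4 →
      (g k : ZMod (p : ℕ)) =
        -(∑ j ∈ Finset.range (k + 1), ((μ : ZMod (p : ℕ))⁻¹) ^ (j + 1)) *
          (g ((p : ℕ) - 3) : ZMod (p : ℕ))) := by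
  haveI : Fact ((p : ℕ)).Prime := ⟨hp⟩
  set q : ℕ := (p : ℕ) with hqdef
  have hq2 : q ≠ 2 := by
    intro h
    rw [h] at hodd
    exact (by decide : ¬ Odd 2) hodd
  have hp3 : 3 ≤ q := by have := hp.two_le; omega
  -- the candidate basis
  set v : Fin (q - 2 + 1) → 𝓞 K :=
    Fin.cons 1 (fun i : Fin (q - 2) => ζ ^ u ^ (i : ℕ)) with hvdef
  have hf : Function.Injective (algebraMap (𝓞 K) K) := RingOfIntegers.coe_injective
  have hζK : IsPrimitiveRoot (algebraMap (𝓞 K) K ζ) q := hζ.map_of_injective hf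
  set ζK : K := algebraMap (𝓞 K) K ζ with hζKdef
  set vK : Fin (q - 2 + 1) → K := fun j => algebraMap (𝓞 K) K (v j) with hvKdef
  have hvK : vK = Fin.cons 1 (fun i : Fin (q - 2) => ζK ^ u ^ (i : ℕ)) := by
    funext j
    induction j using Fin.cases with
    | zero => simp [hvKdef, hvdef]
    | succ i => simp [hvKdef, hvdef, map_pow, hζKdef]
  have hfinrank : Module.finrank ℚ K = q - 1 := by
    rw [IsCyclotomicExtension.finrank (n := p) K (Polynomial.cyclotomic.irreducible_rat p.pos)]
    exact Nat.totient_prime hp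
  have hcard : Fintype.card (Fin (q - 2 + 1)) = Module.finrank ℚ K := by
    rw [hfinrank, Fintype.card_fin]; omega
  have hspanK : ⊤ ≤ Submodule.span ℚ (Set.range vK) := by
    rw [← (hζK.powerBasis ℚ).basis.span_eq]
    refine Submodule.span_le.2 ?_
    rintro _ ⟨i, rfl⟩
    rw [PowerBasis.coe_basis, IsPrimitiveRoot.powerBasis_gen]
    rw [hvK]
    exact aux_span ℚ q u hp hu ζK hζK (i : ℕ)
  have hliK : LinearIndependent ℚ vK :=
    linearIndependent_of_top_le_span_of_card_eq_finrank hspanK hcard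
  have hliZK : LinearIndependent ℤ vK := by
    refine hliK.restrict_scalars ?_
    intro a b h
    simpa [zsmul_eq_mul] using h
  have hliZ : LinearIndependent ℤ v := by
    refine LinearIndependent.of_comp ((algebraMap (𝓞 K) K).toAddMonoidHom.toIntLinearMap) ?_
    exact hliZK
  have hspanZ : ⊤ ≤ Submodule.span ℤ (Set.range v) := by
    set B0 := hζK.integralPowerBasis with hB0
    have hgen : B0.gen = ζ := by
      apply hf
      rw [hB0, hζK.integralPowerBasis_gen]
      rfl
    rw [← B0.basis.span_eq]
    refine Submodule.span_le.2 ?_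
    rintro _ ⟨i, rfl⟩
    rw [PowerBasis.coe_basis, hgen]
    exact aux_span ℤ q u hp hu ζ hζ (i : ℕ)
  set B : Module.Basis (Fin (q - 2 + 1)) ℤ (𝓞 K) := Module.Basis.mk hliZ hspanZ with hB
  -- coefficient extraction
  have hkey : ∀ c : Fin (q - 2 + 1) → ℤ,
      (∑ j, c j • v j) ∈ Ideal.span {((q : ℕ) : 𝓞 K)} → ∀ j, ((c j : ℤ) : ZMod q) = 0 := by
    intro c hc j
    rw [Ideal.mem_span_singleton] at hc
    obtain ⟨w, hw⟩ := hc
    have h1 : (∑ j, c j • v j) = ∑ j, c j • B j := by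
      refine Finset.sum_congr rfl fun j _ => ?_
      rw [hB, Module.Basis.mk_apply]
    have h2 : c = ⇑(B.repr (∑ j, c j • B j)) := (B.repr_sum_self c).symm
    have h3 : (∑ j, c j • B j) = ((q : ℤ) : 𝓞 K) * w := by
      rw [← h1, hw]; push_cast; ring
    have h4 : c j = (q : ℤ) * (B.repr w j) := by
      rw [congrFun h2 j, h3, ← zsmul_eq_mul, map_smul]
      simp
    rw [h4]
    push_cast
    simp [ZMod.natCast_self]
  -- the coefficient vector of σ V - μ V
  set c : Fin (q - 2 + 1) → ℤ :=
    Fin.cons (γ - μ * γ - g (q - 3))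
      (fun i : Fin (q - 2) =>
        (if (i : ℕ) = 0 then 0 else g ((i : ℕ) - 1)) - g (q - 3) - μ * g (i : ℕ)) with hcdef
  have hσV : σ V = (γ : 𝓞 K) + ∑ i ∈ Finset.range (q - 2), (g i : 𝓞 K) * ζ ^ (u ^ (i + 1)) := by
    rw [hV, map_add, map_intCast, map_sum]
    congr 1
    refine Finset.sum_congr rfl fun i _ => ?_
    rw [map_mul, map_intCast, map_pow, hσζ, ← pow_mul, ← pow_succ']
  have hζn : ζ ^ (u ^ (q - 2)) = -1 - ∑ i ∈ Finset.range (q - 2), ζ ^ (u ^ i) := by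
    have hsum := aux_sum q u hp hu ζ hζ
    rw [show q - 1 = (q - 2) + 1 by omega, Finset.sum_range_succ] at hsum
    linear_combination hsum
  set Fn : ℕ → 𝓞 K :=
    fun i => (((if i = 0 then 0 else g (i - 1)) : ℤ) : 𝓞 K) * ζ ^ (u ^ i) with hFn
  have hshift : ∑ i ∈ Finset.range (q - 2), (g i : 𝓞 K) * ζ ^ (u ^ (i + 1)) =
      ∑ i ∈ Finset.range (q - 2), Fn i + (g (q - 3) : 𝓞 K) * ζ ^ (u ^ (q - 2)) := by
    have e1 := Finset.sum_range_succ' Fn (q - 2)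
    have e2 := Finset.sum_range_succ Fn (q - 2)
    have h5 : ∑ i ∈ Finset.range (q - 2), Fn (i + 1) =
        ∑ i ∈ Finset.range (q - 2), (g i : 𝓞 K) * ζ ^ (u ^ (i + 1)) := by
      refine Finset.sum_congr rfl fun i _ => ?_
      rw [hFn]
      simp
    have h6 : Fn 0 = 0 := by rw [hFn]; simp
    have h7 : Fn (q - 2) = (g (q - 3) : 𝓞 K) * ζ ^ (u ^ (q - 2)) := by
      simp only [hFn]
      have : q - 2 ≠ 0 := by omega
      rw [if_neg this, show q - 2 - 1 = q - 3 by omega]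
    rw [h5] at e1
    rw [h6] at e1
    rw [h7] at e2
    linear_combination e2 - e1
  have hxc : σ V - (μ : 𝓞 K) * V = ∑ j, c j • v j := by
    have hrhs : ∑ j, c j • v j =
        ((γ - μ * γ - g (q - 3) : ℤ) : 𝓞 K) +
        ∑ i ∈ Finset.range (q - 2),
          (((if i = 0 then 0 else g (i - 1)) - g (q - 3) - μ * g i : ℤ) : 𝓞 K) * ζ ^ (u ^ i) := by
      rw [Fin.sum_univ_succ]
      congr 1
      · rw [hcdef, hvdef]; simp
      · rw [← Fin.sum_univ_eq_sum_range
          (fun i => (((if i = 0 then 0 else g (i - 1)) - g (q - 3) - μ * g i : ℤ) : 𝓞 K) * ζ ^ (u ^ i))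
          (q - 2)]
        refine Finset.sum_congr rfl fun i _ => ?_
        rw [hcdef, hvdef]
        simp only [Fin.cons_succ]
        rw [zsmul_eq_mul]
    have hsplit : ∑ i ∈ Finset.range (q - 2),
        (((if i = 0 then 0 else g (i - 1)) - g (q - 3) - μ * g i : ℤ) : 𝓞 K) * ζ ^ (u ^ i)
        = (∑ i ∈ Finset.range (q - 2), Fn i)
          - (g (q - 3) : 𝓞 K) * (∑ i ∈ Finset.range (q - 2), ζ ^ (u ^ i))
          - (μ : 𝓞 K) * (∑ i ∈ Finset.range (q - 2), (g i : 𝓞 K) * ζ ^ (u ^ i)) := by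
      rw [Finset.mul_sum, Finset.mul_sum, ← Finset.sum_sub_distrib, ← Finset.sum_sub_distrib]
      refine Finset.sum_congr rfl fun i _ => ?_
      rw [hFn]
      push_cast
      ring
    rw [hrhs, hsplit, hσV, hV, hshift, hζn]
    push_cast
    ring
  have hzero := hkey c (by rw [← hxc]; exact hcong)
  have h0 : ((γ - μ * γ - g (q - 3) : ℤ) : ZMod q) = 0 := by
    have := hzero 0
    rw [hcdef] at this
    simpa using this
  have hrel : ∀ i, i < q - 2 →
      (((if i = 0 then 0 else g (i - 1)) - g (q - 3) - μ * g i : ℤ) : ZMod q) = 0 := by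
    intro i hi
    have := hzero ((⟨i, hi⟩ : Fin (q - 2)).succ)
    rw [hcdef, Fin.cons_succ] at this
    exact this
  -- final algebra in ZMod q
  have hm : ((μ : ℤ) : ZMod q) ≠ 0 := hμ0
  push_cast at h0
  have claim1 : ((γ : ZMod q)) * ((μ : ZMod q) - 1) = -(g (q - 3) : ZMod q) := by
    linear_combination (-1 : ZMod q) * h0
  have claim2 : ((g 0 : ℤ) : ZMod q) = -((μ : ZMod q)⁻¹) * (g (q - 3) : ZMod q) := by
    have h := hrel 0 (by omega)
    norm_num at h
    push_cast at h
    rw [neg_mul, eq_comm, neg_eq_iff_eq_neg, eq_comm, eq_inv_mul_iff_mul_eq₀ hm]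
    linear_combination h
  have hstep : ∀ i, 1 ≤ i → i < q - 2 →
      ((g i : ℤ) : ZMod q) = ((μ : ZMod q)⁻¹) * (((g (i - 1) : ℤ) : ZMod q) - (g (q - 3) : ZMod q)) := by
    intro i h1 h2
    have h := hrel i h2
    rw [if_neg (by omega)] at h
    push_cast at h
    rw [eq_inv_mul_iff_mul_eq₀ hm]
    linear_combination -h
  refine ⟨claim1, claim2, ?_⟩
  intro k hk1 hk4
  induction k, hk1 using Nat.le_induction with
  | base =>
    have hg1 := hstep 1 le_rfl (by omega)
    norm_num at hg1
    rw [hg1, claim2]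
    rw [show (1 : ℕ) + 1 = 2 from rfl, Finset.sum_range_succ, Finset.sum_range_one]
    ring
  | succ k hk ih =>
    have ih' := ih (by omega)
    have hs := hstep (k + 1) (by omega) (by omega)
    rw [Nat.add_sub_cancel] at hs
    rw [hs, ih']
    rw [Finset.sum_range_succ' (fun j => ((μ : ZMod q)⁻¹) ^ (j + 1)) (k + 1)]
    have hmul : ∑ j ∈ Finset.range (k + 1), ((μ : ZMod q)⁻¹) ^ (j + 1 + 1)
        = ((μ : ZMod q)⁻¹) * ∑ j ∈ Finset.range (k + 1), ((μ : ZMod q)⁻¹) ^ (j + 1) := by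
      rw [Finset.mul_sum]
      exact Finset.sum_congr rfl fun j _ => by ring
    rw [hmul]
    ring
end

section
/- Let p be an odd prime, u a primitive root mod p, ζ a primitive p-th root of unity, σ(ζ) = ζ^u, π = (ζ-1)ℤ[ζ]. Let μ ∈ ℤ with μ ≢ 0,1 (mod p) and suppose C = 1 + V with V ∈ ℤ[ζ], V ≡ 0 (mod π^{(p+1)/2}), and σ(C) ≡ C^μ (mod π^{p+1}). Then C ≡ 1 - (γ/(μ-1))·(ζ + μ^{-1}ζ^u + μ^{-2}ζ^{u²} + ⋯ + μ^{-(p-2)}ζ^{u^{p-2}}) (mod π^{p-1}) for some integer γ. -/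
open NumberField Finset Polynomial



lemma geoSum {q : ℕ} [Fact q.Prime] (t : ZMod q) (ht : t ≠ 0) :
    ∑ i ∈ range (q - 1), t ^ i = if t = 1 then -1 else 0 := by
  split_ifs with h
  · subst h
    simp only [one_pow, sum_const, card_range, nsmul_eq_mul, mul_one]
    have h2 : 2 ≤ q := (Fact.out : q.Prime).two_le
    have : ((q - 1 : ℕ) : ZMod q) = (q : ZMod q) - 1 := by
      push_cast [Nat.cast_sub (by omega : 1 ≤ q)]; ring
    rw [this, ZMod.natCast_self]; ring
  · have hg : (∑ i ∈ range (q - 1), t ^ i) * (t - 1) = t ^ (q - 1) - 1 := geom_sum_mul t (q - 1)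
    rw [ZMod.pow_card_sub_one_eq_one ht, sub_self] at hg
    rcases mul_eq_zero.1 hg with h1 | h1
    · exact h1
    · exact absurd (sub_eq_zero.1 h1) h

lemma binomExpand {R : Type*} [CommRing R] (V : R) (n : ℕ) :
    V ^ 2 ∣ (1 + V) ^ n - 1 - n * V := by
  induction n with
  | zero => simp
  | succ n ih =>
    have : (1 + V) ^ (n + 1) - 1 - (n + 1 : ℕ) * V
        = ((1 + V) ^ n - 1 - n * V) * (1 + V) + n * V ^ 2 := by
      push_cast; ring
    rw [this]
    exact dvd_add (ih.mul_right _) (Dvd.dvd.mul_left (dvd_refl _) _)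

lemma truncPow {R : Type*} [CommRing R] (lam : R) (Kk n : ℕ) :
    lam ^ Kk ∣ (1 + lam) ^ n - ∑ j ∈ range Kk, (n.choose j : R) * lam ^ j := by
  have hexp : (1 + lam) ^ n = ∑ j ∈ range (n + 1), (n.choose j : R) * lam ^ j := by
    rw [add_comm 1 lam, add_pow]
    refine Finset.sum_congr rfl fun j hj => ?_
    ring
  rcases le_or_gt (n + 1) Kk with h | h
  · have : ∑ j ∈ range Kk, (n.choose j : R) * lam ^ j
        = ∑ j ∈ range (n + 1), (n.choose j : R) * lam ^ j := by
      symm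
      refine Finset.sum_subset (Finset.range_subset_range.2 h) fun x _ hx => ?_
      rw [Nat.choose_eq_zero_of_lt (by simpa using hx)]; simp
    rw [hexp, this, sub_self]
    exact dvd_zero _
  · have hsplit : ∑ j ∈ range (n + 1), (n.choose j : R) * lam ^ j
        = (∑ j ∈ range Kk, (n.choose j : R) * lam ^ j)
          + ∑ j ∈ Ico Kk (n + 1), (n.choose j : R) * lam ^ j := by
      simp only [range_eq_Ico]
      exact (Finset.sum_Ico_consecutive _ (Nat.zero_le Kk) h.le).symm
    rw [hexp, hsplit, add_sub_cancel_left]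
    refine Finset.dvd_sum fun j hj => ?_
    exact Dvd.dvd.mul_left (pow_dvd_pow lam (Finset.mem_Ico.1 hj).1) _

lemma descCast {R : Type*} [CommRing R] (n j : ℕ) :
    ((n.descFactorial j : ℕ) : R) = ∏ m ∈ range j, ((n : R) - m) := by
  rcases le_or_gt j n with h | h
  · rw [Nat.descFactorial_eq_prod_range, Nat.cast_prod]
    refine Finset.prod_congr rfl fun m hm => ?_
    have : m ≤ n := le_trans (Nat.le_of_lt_succ (Nat.lt_succ_of_lt (Finset.mem_range.1 hm))) h
    push_cast [Nat.cast_sub this]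
    ring
  · rw [Nat.descFactorial_eq_zero_iff_lt.2 h, Nat.cast_zero]
    symm
    refine Finset.prod_eq_zero (Finset.mem_range.2 h) ?_
    simp


lemma AjLemma (q u μ k : ℕ) [Fact q.Prime]
    (hinj : ∀ i j : ℕ, i ≤ j → (u : ZMod q) ^ i = (u : ZMod q) ^ j → (q - 1) ∣ j - i)
    (hμ0 : (μ : ZMod q) ≠ 0) (hμ1 : (μ : ZMod q) ≠ 1)
    (hk : (u : ZMod q) ^ k = (μ : ZMod q)) (hk2 : k ≤ q - 2)
    (j : ℕ) (hj : j ≤ k) :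
    ∑ i ∈ range (q - 1), ((μ : ZMod q)⁻¹) ^ i * ((u ^ i).choose j : ZMod q)
      = if j = k then -((k.factorial : ZMod q))⁻¹ else 0 := by
  have hq : q.Prime := Fact.out
  have hqk : k < q := by have := hq.two_le; omega
  have hk1 : 1 ≤ k := by
    rcases Nat.eq_zero_or_pos k with h | h
    · exact absurd (by simpa [h] using hk.symm) hμ1
    · exact h
  have hu0 : (u : ZMod q) ≠ 0 := by
    intro h
    rw [h, zero_pow (by omega)] at hk
    exact hμ0 hk.symm
  have hinv0 : ((μ : ZMod q)⁻¹) ≠ 0 := inv_ne_zero hμ0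
  -- the polynomial
  set Q : (ZMod q)[X] := ∏ m ∈ range j, (X - C (m : ZMod q)) with hQ
  have hQmonic : Q.Monic := monic_prod_of_monic _ _ fun m _ => monic_X_sub_C _
  have hQdeg : Q.natDegree = j := by
    rw [hQ, natDegree_prod _ _ fun m _ => X_sub_C_ne_zero _]
    simp only [natDegree_X_sub_C]
    simp
  have hQeval : ∀ x : ZMod q, Q.eval x = ∏ m ∈ range j, (x - m) := by
    intro x; simp [hQ, eval_prod]
  -- step 1
  have step1 : ∀ n : ℕ, ((n.choose j : ℕ) : ZMod q) * (j.factorial : ZMod q) = Q.eval (n : ZMod q) := by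
    intro n
    rw [hQeval, ← descCast]
    rw [Nat.descFactorial_eq_factorial_mul_choose]
    push_cast; ring
  have hfac : ((j.factorial : ℕ) : ZMod q) ≠ 0 := by
    rw [Ne, ZMod.natCast_eq_zero_iff]
    intro h
    exact absurd (hq.dvd_factorial.1 h) (by omega)
  -- key computation
  have key : (∑ i ∈ range (q - 1), ((μ : ZMod q)⁻¹) ^ i * ((u ^ i).choose j : ZMod q))
      * (j.factorial : ZMod q) = if j = k then -1 else 0 := by
    rw [Finset.sum_mul]
    have e1 : ∀ i, ((μ : ZMod q)⁻¹) ^ i * ((u ^ i).choose j : ZMod q) * (j.factorial : ZMod q)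
        = ((μ : ZMod q)⁻¹) ^ i * Q.eval ((u : ZMod q) ^ i) := by
      intro i
      rw [mul_assoc, step1]
      push_cast
      ring_nf
    simp only [e1]
    have e2 : ∀ i, ((μ : ZMod q)⁻¹) ^ i * Q.eval ((u : ZMod q) ^ i)
        = ∑ m ∈ range (j + 1), Q.coeff m * ((u : ZMod q) ^ m * (μ : ZMod q)⁻¹) ^ i := by
      intro i
      rw [eval_eq_sum_range, hQdeg, Finset.mul_sum]
      refine Finset.sum_congr rfl fun m _ => ?_
      rw [mul_pow, ← pow_mul, ← pow_mul, mul_comm m i]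
      ring
    simp only [e2]
    rw [Finset.sum_comm]
    have e3 : ∀ m, m ∈ range (j + 1) →
        Q.coeff m * ∑ i ∈ range (q - 1), ((u : ZMod q) ^ m * (μ : ZMod q)⁻¹) ^ i
        = Q.coeff m * (if m = k then -1 else 0) := by
      intro m hm
      congr 1
      rw [geoSum _ (mul_ne_zero (pow_ne_zero _ hu0) hinv0)]
      congr 1
      rw [eq_iff_iff]
      constructor
      · intro h
        have hum : (u : ZMod q) ^ m = (u : ZMod q) ^ k := by
          rw [hk, ← (mul_inv_eq_one₀ hμ0).1 h]
        have hmk : m ≤ k := le_trans (Nat.lt_succ_iff.1 (Finset.mem_range.1 hm)) hj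
        have hd := hinj m k hmk hum
        rcases Nat.eq_zero_or_pos (k - m) with h0 | h0
        · omega
        · have := Nat.le_of_dvd h0 hd
          have hq2 : 2 ≤ q := hq.two_le
          omega
      · intro h; subst h
        rw [hk, mul_inv_cancel₀ hμ0]
    simp only [← Finset.mul_sum]
    rw [Finset.sum_congr rfl e3]
    have e4 : ∀ m, Q.coeff m * (if m = k then (-1 : ZMod q) else 0)
        = if m = k then -(Q.coeff m) else 0 := by
      intro m; split_ifs <;> ring
    simp only [e4]
    rw [Finset.sum_ite_eq' (range (j + 1)) k fun m => -(Q.coeff m)]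
    by_cases hjk : j = k
    · subst hjk
      rw [if_pos rfl, if_pos (Finset.mem_range.2 (Nat.lt_succ_self j)),
        ← hQdeg, hQmonic.coeff_natDegree]
    · rw [if_neg hjk, if_neg (by simp; omega)]
  -- conclude
  by_cases hjk : j = k
  · subst hjk
    rw [if_pos rfl] at key ⊢
    refine mul_right_cancel₀ hfac ?_
    rw [key, neg_mul, inv_mul_cancel₀ hfac]
  · rw [if_neg hjk] at key ⊢
    refine mul_right_cancel₀ hfac ?_
    rw [key, zero_mul]


lemma killLemma {R : Type*} [CommRing R] [IsDomain R] (q : ℕ) [Fact q.Prime] (u μ : ℕ)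
    (lam : R) (hlam0 : lam ≠ 0) (σ : R →+* R)
    (hdig : ∀ X : R, ∃ c : ℤ, lam ∣ X - (c : R))
    (hint : ∀ n : ℤ, lam ∣ (n : R) → (q : ℤ) ∣ n)
    (hqd : lam ∣ (q : R))
    (hσ2 : lam ^ 2 ∣ σ lam - (u : R) * lam) :
    ∀ n a b : ℕ, b - a ≤ n → ∀ X : R, lam ^ a ∣ X → lam ^ b ∣ σ X - (μ : R) * X →
      (∀ j, a ≤ j → j < b → (u : ZMod q) ^ j ≠ (μ : ZMod q)) → lam ^ b ∣ X := by
  have hσlam : lam ∣ σ lam := by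
    have : σ lam = (σ lam - (u : R) * lam) + (u : R) * lam := by ring
    rw [this]
    exact dvd_add (dvd_trans (dvd_pow_self lam two_ne_zero) hσ2) (Dvd.dvd.mul_left (dvd_refl _) _)
  have hσd : ∀ (n : ℕ) (X : R), lam ^ n ∣ X → lam ^ n ∣ σ X := by
    rintro n X ⟨y, rfl⟩
    rw [map_mul, map_pow]
    exact Dvd.dvd.mul_right (pow_dvd_pow_of_dvd hσlam n) _
  have hpowa : ∀ a : ℕ, lam ^ (a + 1) ∣ (σ lam) ^ a - ((u : R) * lam) ^ a := by
    intro a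
    rcases a with _ | s
    · simp
    · rw [← geom_sum₂_mul]
      have h1 : lam ^ s ∣ ∑ i ∈ range (s + 1), (σ lam) ^ i * ((u : R) * lam) ^ (s - i) := by
        refine Finset.dvd_sum fun i hi => ?_
        have hi1 : i ≤ s := Nat.lt_succ_iff.1 (Finset.mem_range.1 hi)
        have d1 : lam ^ i ∣ (σ lam) ^ i := pow_dvd_pow_of_dvd hσlam i
        have d2 : lam ^ (s - i) ∣ ((u : R) * lam) ^ (s - i) :=
          pow_dvd_pow_of_dvd (Dvd.dvd.mul_left dvd_rfl _) _
        have := mul_dvd_mul d1 d2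
        rwa [← pow_add, Nat.add_sub_cancel' hi1] at this
      have := mul_dvd_mul h1 hσ2
      rwa [← pow_add] at this
  intro n
  induction n with
  | zero =>
    intro a b hd X h1 _ _
    exact dvd_trans (pow_dvd_pow lam (by omega)) h1
  | succ n ih =>
    intro a b hd X h1 h2 h3
    by_cases hab : b ≤ a
    · exact dvd_trans (pow_dvd_pow lam hab) h1
    push_neg at hab
    obtain ⟨Y, hY⟩ := h1
    obtain ⟨c, hc⟩ := hdig Y
    have hX1 : lam ^ (a + 1) ∣ X - (c : R) * lam ^ a := by
      have : X - (c : R) * lam ^ a = lam ^ a * (Y - (c : R)) := by rw [hY]; ring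
      rw [this, pow_succ]
      exact mul_dvd_mul dvd_rfl hc
    -- σ X - μ X ≡ c (u^a - μ) lam^a mod lam^(a+1)
    have hkey : lam ^ (a + 1) ∣ ((c * ((u : ℤ) ^ a - (μ : ℤ))) : ℤ) * lam ^ a := by
      have e1 : ((c * ((u : ℤ) ^ a - (μ : ℤ))) : ℤ) * lam ^ a
          = (σ X - (μ : R) * X)
            - ((σ (X - (c : R) * lam ^ a) - (μ : R) * (X - (c : R) * lam ^ a))
              + (c : R) * ((σ lam) ^ a - ((u : R) * lam) ^ a)) := by
        have hσX : σ (X - (c : R) * lam ^ a) = σ X - (c : R) * (σ lam) ^ a := by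
          rw [map_sub, map_mul, map_pow, map_intCast]
        rw [hσX, mul_pow]
        push_cast
        ring
      rw [e1]
      refine dvd_sub (dvd_trans (pow_dvd_pow lam (by omega)) h2) (dvd_add ?_ ?_)
      · exact dvd_sub (hσd _ _ hX1) (Dvd.dvd.mul_left hX1 _)
      · exact Dvd.dvd.mul_left (hpowa a) _
    have hcan : lam ∣ ((c * ((u : ℤ) ^ a - (μ : ℤ))) : ℤ) := by
      have h4 : lam ^ a * lam ∣ lam ^ a * ((c * ((u : ℤ) ^ a - (μ : ℤ))) : ℤ) := by
        rw [← pow_succ]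
        rw [mul_comm (lam ^ a) _]
        exact hkey
      exact (mul_dvd_mul_iff_left (pow_ne_zero a hlam0)).1 h4
    have hzp : ((c : ZMod q)) * ((u : ZMod q) ^ a - (μ : ZMod q)) = 0 := by
      have := hint _ hcan
      have h5 : ((c * ((u : ℤ) ^ a - (μ : ℤ)) : ℤ) : ZMod q) = 0 :=
        (ZMod.intCast_zmod_eq_zero_iff_dvd _ _).2 this
      push_cast at h5
      exact_mod_cast h5
    have hc0 : (q : ℤ) ∣ c := by
      have hne : (u : ZMod q) ^ a - (μ : ZMod q) ≠ 0 :=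
        sub_ne_zero.2 (h3 a le_rfl hab)
      have : (c : ZMod q) = 0 := by
        rcases mul_eq_zero.1 hzp with h | h
        · exact h
        · exact absurd h hne
      exact_mod_cast (ZMod.intCast_zmod_eq_zero_iff_dvd _ _).1 this
    have hlc : lam ∣ (c : R) := by
      obtain ⟨d, hd'⟩ := hc0
      rw [hd']
      push_cast
      exact Dvd.dvd.mul_right hqd _
    have hXa1 : lam ^ (a + 1) ∣ X := by
      have : X = (X - (c : R) * lam ^ a) + (c : R) * lam ^ a := by ring
      rw [this]
      refine dvd_add hX1 ?_
      rw [pow_succ, mul_comm (lam ^ a) lam]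
      exact mul_dvd_mul hlc dvd_rfl
    exact ih (a + 1) b (by omega) X hXa1 h2 fun j hj1 hj2 => h3 j (by omega) hj2


/-- If `C = 1 + V` with `V ≡ 0 (mod π^((p+1)/2))` and `σ(C) ≡ C^μ (mod π^(p+1))`
with `μ ≢ 0, 1 (mod p)`, then
`C ≡ 1 - (γ/(μ-1))·(ζ + μ⁻¹ζ^u + ⋯ + μ^{-(p-2)}ζ^{u^{p-2}}) (mod π^(p-1))`
for some integer `γ`; here `c` is an integer representing `-γ/(μ-1) mod p` and the
integers `w i` represent the powers `μ^{-i} mod p`. -/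
theorem stmt10 (p : ℕ+) (hp : (p : ℕ).Prime) (hodd : Odd (p : ℕ))
    (u : ℕ) (hu : orderOf (u : ZMod (p : ℕ)) = (p : ℕ) - 1)
    {K : Type*} [Field K] [NumberField K] [IsCyclotomicExtension {(p : ℕ)} ℚ K]
    (ζ : 𝓞 K) (hζ : IsPrimitiveRoot ζ (p : ℕ))
    (σ : 𝓞 K ≃+* 𝓞 K) (hσζ : σ ζ = ζ ^ u)
    (π : Ideal (𝓞 K)) (hπ : π = Ideal.span {ζ - 1})
    (μ : ℕ) (hμ0 : (μ : ZMod (p : ℕ)) ≠ 0) (hμ1 : (μ : ZMod (p : ℕ)) ≠ 1)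
    (V : 𝓞 K) (hV : V ∈ π ^ (((p : ℕ) + 1) / 2))
    (C : 𝓞 K) (hC : C = 1 + V)
    (hσC : σ C - C ^ μ ∈ π ^ ((p : ℕ) + 1)) :
    ∃ γ c : ℤ, (c : ZMod (p : ℕ)) * ((μ : ZMod (p : ℕ)) - 1) = -(γ : ZMod (p : ℕ)) ∧
      ∃ w : ℕ → ℤ, (∀ i, (w i : ZMod (p : ℕ)) = ((μ : ZMod (p : ℕ))⁻¹) ^ i) ∧
        C - (1 + (c : 𝓞 K) * ∑ i ∈ Finset.range ((p : ℕ) - 1), (w i : 𝓞 K) * ζ ^ (u ^ i))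
          ∈ π ^ ((p : ℕ) - 1) := by
  haveI : Fact ((p : ℕ)).Prime := ⟨hp⟩
  set P : ℕ := (p : ℕ) with hP
  have hP3 : 3 ≤ P := by
    have h2 := hp.two_le
    rcases Nat.odd_iff.1 hodd with h
    omega
  set lam : 𝓞 K := ζ - 1 with hlam
  -- membership in powers of π is divisibility by powers of lam
  have hmem : ∀ (n : ℕ) (x : 𝓞 K), x ∈ π ^ n ↔ lam ^ n ∣ x := by
    intro n x
    rw [hπ, Ideal.span_singleton_pow, Ideal.mem_span_singleton]
  -- ζ in K
  have hinj : Function.Injective (algebraMap (𝓞 K) K) := NumberField.RingOfIntegers.coe_injective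
  have hζK : IsPrimitiveRoot ((algebraMap (𝓞 K) K) ζ) (p : ℕ) := hζ.map_of_injective hinj
  have hζK' : IsPrimitiveRoot ((algebraMap (𝓞 K) K) ζ) ((p : ℕ+) : ℕ) := hζK
  have htoInt : hζK'.toInteger = ζ := by
    apply hinj
    rfl
  -- lam is prime
  have hlamprime : Prime lam := by
    have := hζK'.zeta_sub_one_prime'
    rwa [htoInt] at this
  have hlam0 : lam ≠ 0 := hlamprime.ne_zero
  -- lam^(P-1) divides P
  have hζ1 : IsPrimitiveRoot ζ ((P - 1) + 1) := by
    have : P - 1 + 1 = P := by omega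
    rwa [this]
  have hgeom : ∀ m : ℕ, lam ∣ ζ ^ m - 1 := by
    intro m
    have := geom_sum_mul ζ m
    exact Dvd.intro_left _ this
  have hpdvd : lam ^ (P - 1) ∣ (P : 𝓞 K) := by
    have hprod := hζ1.prod_one_sub_pow_eq_order
    have : ((P - 1 : ℕ) : 𝓞 K) + 1 = (P : 𝓞 K) := by
      push_cast [Nat.cast_sub (by omega : 1 ≤ P)]; ring
    rw [this] at hprod
    rw [← hprod]
    have : lam ^ (P - 1) = ∏ _k ∈ range (P - 1), lam := by
      rw [Finset.prod_const, card_range]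
    rw [this]
    refine Finset.prod_dvd_prod_of_dvd _ _ fun k _ => ?_
    rw [← neg_sub]
    exact (hgeom (k + 1)).neg_right
  have hlamP : lam ∣ (P : 𝓞 K) :=
    dvd_trans (dvd_pow_self lam (by omega : P - 1 ≠ 0)) hpdvd
  -- integers divisible by lam are divisible by P
  have hint : ∀ n : ℤ, lam ∣ (n : 𝓞 K) → (P : ℤ) ∣ n := by
    intro n hn
    have hmod : n % (P : ℤ) = 0 → (P : ℤ) ∣ n := fun h => Int.dvd_of_emod_eq_zero h
    by_contra hndvd
    set r : ℤ := n % (P : ℤ) with hr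
    have hr0 : r ≠ 0 := fun h => hndvd (hmod h)
    have hPpos : (0 : ℤ) < (P : ℤ) := by exact_mod_cast (by omega : 0 < P)
    have hrlt : r < (P : ℤ) := Int.emod_lt_of_pos n hPpos
    have hrpos : 0 ≤ r := Int.emod_nonneg n (by omega)
    have hlr : lam ∣ (r : 𝓞 K) := by
      rw [hr, Int.emod_def]
      push_cast
      refine dvd_sub hn ?_
      exact Dvd.dvd.mul_right (by exact_mod_cast hlamP) _
    -- r is coprime to P
    have hcop : IsCoprime (r : ℤ) (P : ℤ) := by
      rw [Int.isCoprime_iff_gcd_eq_one]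
      have hnd : ¬ (P ∣ r.natAbs) := by
        intro hdv
        have h1 : 0 < r.natAbs := by omega
        have := Nat.le_of_dvd h1 hdv
        omega
      have hcp : Nat.Coprime P r.natAbs := (Nat.Prime.coprime_iff_not_dvd hp).2 hnd
      have : Int.gcd r (P : ℤ) = Nat.gcd r.natAbs P := by
        simp [Int.gcd]
      rw [this]
      exact Nat.Coprime.symm hcp
    obtain ⟨a, b, hab⟩ := hcop
    have : lam ∣ 1 := by
      have : (1 : 𝓞 K) = (a : 𝓞 K) * r + (b : 𝓞 K) * P := by
        have := congrArg (fun z : ℤ => (z : 𝓞 K)) hab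
        push_cast at this
        rw [this]
      rw [this]
      exact dvd_add (hlr.mul_left _) (hlamP.mul_left _)
    exact hlamprime.not_unit (isUnit_of_dvd_one this)
  -- u is nonzero mod p
  have hu0 : (u : ZMod P) ≠ 0 := by
    intro h0
    have h1 : (u : ZMod P) ^ (P - 1) = 1 := by
      rw [← hu]; exact pow_orderOf_eq_one _
    rw [h0, zero_pow (by omega : P - 1 ≠ 0)] at h1
    exact zero_ne_one h1
  -- digit lemma
  have hdig : ∀ X : 𝓞 K, ∃ c : ℤ, lam ∣ X - (c : 𝓞 K) := by
    intro X
    obtain ⟨f, hf⟩ := hζK'.integralPowerBasis.exists_eq_aeval' X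
    rw [hζK'.integralPowerBasis_gen, htoInt] at hf
    refine ⟨Polynomial.eval 1 f, ?_⟩
    set g : Polynomial (𝓞 K) := f.map (Int.castRingHom (𝓞 K)) with hg
    have h1 : X = g.eval ζ := by
      rw [hf, hg, Polynomial.eval_map, Polynomial.aeval_def]
      rfl
    have h2 : ((Polynomial.eval 1 f : ℤ) : 𝓞 K) = g.eval 1 := by
      rw [hg, Polynomial.eval_map, Polynomial.eval₂_at_one]
      rfl
    rw [h1, h2]
    exact Polynomial.sub_dvd_eval_sub ζ 1 g
  -- powers of u are injective mod p-1
  have hinjpow : ∀ i j : ℕ, i ≤ j → (u : ZMod P) ^ i = (u : ZMod P) ^ j → (P - 1) ∣ j - i := by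
    intro i j hij h
    obtain ⟨d, rfl⟩ := Nat.exists_eq_add_of_le hij
    rw [pow_add] at h
    have h2 : (u : ZMod P) ^ i * 1 = (u : ZMod P) ^ i * (u : ZMod P) ^ d := by
      rw [mul_one]; exact h
    have h3 : (u : ZMod P) ^ d = 1 :=
      (mul_left_cancel₀ (pow_ne_zero i hu0) h2).symm
    have := orderOf_dvd_of_pow_eq_one h3
    rw [hu] at this
    simpa using this
  -- existence of k with u^k = μ
  have hkex : ∃ k, k < P - 1 ∧ (u : ZMod P) ^ k = (μ : ZMod P) := by
    have himg : Finset.image (fun i => (u : ZMod P) ^ i) (range (P - 1))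
        ⊆ Finset.univ.erase (0 : ZMod P) := by
      intro x hx
      obtain ⟨i, _, rfl⟩ := Finset.mem_image.1 hx
      exact Finset.mem_erase.2 ⟨pow_ne_zero i hu0, Finset.mem_univ _⟩
    have hcards : (Finset.univ.erase (0 : ZMod P)).card ≤
        (Finset.image (fun i => (u : ZMod P) ^ i) (range (P - 1))).card := by
      rw [Finset.card_erase_of_mem (Finset.mem_univ _), Finset.card_univ, ZMod.card]
      rw [Finset.card_image_of_injOn]
      · simp
      · intro i hi j hj hij
        simp only [Finset.coe_range, Set.mem_Iio, Finset.mem_coe, Finset.mem_range] at hi hj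
        rcases le_or_gt i j with h | h
        · have hd := hinjpow i j h hij
          rcases Nat.eq_zero_or_pos (j - i) with h0 | h0
          · omega
          · have := Nat.le_of_dvd h0 hd
            omega
        · have hd := hinjpow j i h.le hij.symm
          rcases Nat.eq_zero_or_pos (i - j) with h0 | h0
          · omega
          · have := Nat.le_of_dvd h0 hd
            omega
    have heq := Finset.eq_of_subset_of_card_le himg hcards
    have hμmem : (μ : ZMod P) ∈ Finset.univ.erase (0 : ZMod P) :=
      Finset.mem_erase.2 ⟨hμ0, Finset.mem_univ _⟩
    rw [← heq] at hμmem
    obtain ⟨k, hk1, hk2⟩ := Finset.mem_image.1 hμmem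
    exact ⟨k, Finset.mem_range.1 hk1, hk2⟩
  obtain ⟨k, hklt, hkμ⟩ := hkex
  have hk1 : 1 ≤ k := by
    rcases Nat.eq_zero_or_pos k with h | h
    · rw [h, pow_zero] at hkμ
      exact absurd hkμ.symm hμ1
    · exact h
  have hk2 : k ≤ P - 2 := by omega
  -- ζ = 1 + lam
  have hζeq : ζ = 1 + lam := by rw [hlam]; ring
  -- σ lam ≡ u lam mod lam²
  have hσ2 : lam ^ 2 ∣ σ lam - (u : 𝓞 K) * lam := by
    have h1 : σ lam = ζ ^ u - 1 := by rw [hlam, map_sub, map_one, hσζ]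
    have h2 := truncPow lam 2 u
    have h3 : ∑ j ∈ range 2, ((u.choose j : ℕ) : 𝓞 K) * lam ^ j = 1 + (u : 𝓞 K) * lam := by
      rw [Finset.sum_range_succ, Finset.sum_range_one]
      simp
    rw [h3] at h2
    have h4 : σ lam - (u : 𝓞 K) * lam = (1 + lam) ^ u - (1 + (u : 𝓞 K) * lam) := by
      rw [h1, ← hζeq]; ring
    rw [h4]
    exact h2
  -- the resolvent element
  set w : ℕ → ℤ := fun i => ((((μ : ZMod P)⁻¹ ^ i).val : ℕ) : ℤ) with hw
  have hwval : ∀ i, ((w i : ℤ) : ZMod P) = (μ : ZMod P)⁻¹ ^ i := by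
    intro i
    rw [hw]
    push_cast
    rw [ZMod.natCast_val, ZMod.cast_id]
  set T : 𝓞 K := ∑ i ∈ Finset.range (P - 1), (w i : 𝓞 K) * ζ ^ (u ^ i) with hT
  -- mod-p periodicity of powers of ζ
  have hζpow : ∀ m n : ℕ, m % P = n % P → ζ ^ m = ζ ^ n := by
    intro m n h
    have hz1 : ζ ^ P = 1 := hζ.pow_eq_one
    have e : ∀ s : ℕ, ζ ^ s = ζ ^ (s % P) := by
      intro s
      conv_lhs => rw [← Nat.div_add_mod s P]
      rw [pow_add, pow_mul, hz1, one_pow, one_mul]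
    rw [e m, e n, h]
  have hmodu : u ^ (P - 1) % P = 1 % P := by
    have h1 : ((u ^ (P - 1) : ℕ) : ZMod P) = ((1 : ℕ) : ZMod P) := by
      push_cast
      rw [← hu]
      exact pow_orderOf_eq_one _
    exact (ZMod.natCast_eq_natCast_iff _ _ _).1 h1
  -- σ T ≡ μ T mod lam^(P-1)
  have hσT : lam ^ (P - 1) ∣ σ T - (μ : 𝓞 K) * T := by
    set h : ℕ → 𝓞 K := fun i => (μ : 𝓞 K) * (w i : 𝓞 K) * ζ ^ (u ^ i) with hh
    have hσTexp : σ T = ∑ i ∈ range (P - 1), (w i : 𝓞 K) * ζ ^ (u ^ (i + 1)) := by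
      rw [hT, map_sum]
      refine Finset.sum_congr rfl fun i _ => ?_
      rw [map_mul, map_intCast, map_pow, hσζ, ← pow_mul, ← pow_succ']
    have hPP : P - 1 + 1 = P := by omega
    have hE1 : ∑ i ∈ range (P - 1), h (i + 1)
        = (μ : 𝓞 K) * T + h (P - 1) - h 0 := by
      have e1 : ∑ i ∈ range (P - 1 + 1), h i = (∑ i ∈ range (P - 1), h (i + 1)) + h 0 :=
        Finset.sum_range_succ' h (P - 1)
      have e2 : ∑ i ∈ range (P - 1 + 1), h i = (∑ i ∈ range (P - 1), h i) + h (P - 1) :=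
        Finset.sum_range_succ h (P - 1)
      have e3 : (μ : 𝓞 K) * T = ∑ i ∈ range (P - 1), h i := by
        rw [hT, Finset.mul_sum]
        exact Finset.sum_congr rfl fun i _ => by rw [hh]; ring
      rw [e3]
      linear_combination e2 - e1
    have key : σ T - (μ : 𝓞 K) * T
        = (∑ i ∈ range (P - 1), ((w i - μ * w (i + 1) : ℤ) : 𝓞 K) * ζ ^ (u ^ (i + 1)))
          + (h (P - 1) - h 0) := by
      have hs : ∑ i ∈ range (P - 1), ((w i - μ * w (i + 1) : ℤ) : 𝓞 K) * ζ ^ (u ^ (i + 1))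
          = (∑ i ∈ range (P - 1), (w i : 𝓞 K) * ζ ^ (u ^ (i + 1)))
            - ∑ i ∈ range (P - 1), h (i + 1) := by
        rw [← Finset.sum_sub_distrib]
        refine Finset.sum_congr rfl fun i _ => ?_
        rw [hh]
        push_cast
        ring
      rw [hσTexp, hs, hE1]
      ring
    rw [key]
    refine dvd_add (Finset.dvd_sum fun i _ => ?_) ?_
    · have hz : ((w i - μ * w (i + 1) : ℤ) : ZMod P) = 0 := by
        push_cast [hwval]
        have : (μ : ZMod P) * (μ : ZMod P)⁻¹ ^ (i + 1)
            = (μ : ZMod P)⁻¹ ^ i := by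
          rw [pow_succ, show (μ : ZMod P) * ((μ : ZMod P)⁻¹ ^ i * (μ : ZMod P)⁻¹)
            = (μ : ZMod P)⁻¹ ^ i * ((μ : ZMod P) * (μ : ZMod P)⁻¹) from by ring,
            mul_inv_cancel₀ hμ0, mul_one]
        rw [this, sub_self]
      obtain ⟨d, hd⟩ := (ZMod.intCast_zmod_eq_zero_iff_dvd _ _).1 hz
      rw [hd]
      push_cast
      exact ((hpdvd.mul_right _).mul_right _)
    · have hz2 : ζ ^ (u ^ 0) = ζ ^ (u ^ (P - 1)) := (hζpow _ _ (by rw [pow_zero]; exact hmodu.symm))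
      have he : h (P - 1) - h 0
          = (μ : 𝓞 K) * (((w (P - 1) - w 0 : ℤ)) : 𝓞 K) * ζ ^ (u ^ (P - 1)) := by
        rw [hh]
        simp only
        rw [hz2]
        push_cast
        ring
      have hz3 : ((w (P - 1) - w 0 : ℤ) : ZMod P) = 0 := by
        push_cast [hwval]
        rw [pow_zero, ZMod.pow_card_sub_one_eq_one (inv_ne_zero hμ0), sub_self]
      obtain ⟨d, hd⟩ := (ZMod.intCast_zmod_eq_zero_iff_dvd _ _).1 hz3
      rw [he, hd]
      push_cast
      exact (((hpdvd.mul_right _).mul_left _).mul_right _)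
  -- the coefficients A j
  set A : ℕ → ℤ := fun j => ∑ i ∈ range (P - 1), w i * (((u ^ i).choose j : ℕ) : ℤ) with hA
  have hAval : ∀ j, ((A j : ℤ) : ZMod P)
      = ∑ i ∈ range (P - 1), (μ : ZMod P)⁻¹ ^ i * (((u ^ i).choose j : ℕ) : ZMod P) := by
    intro j
    rw [hA]
    push_cast
    exact Finset.sum_congr rfl fun i _ => by rw [hwval]
  have hAj : ∀ j, j ≤ k → ((A j : ℤ) : ZMod P)
      = if j = k then -((k.factorial : ZMod P))⁻¹ else 0 := by
    intro j hj
    rw [hAval]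
    exact AjLemma P u μ k hinjpow hμ0 hμ1 hkμ hk2 j hj
  have hfacne : ((k.factorial : ℕ) : ZMod P) ≠ 0 := by
    rw [Ne, ZMod.natCast_eq_zero_iff]
    intro hdv
    have := hp.dvd_factorial.1 hdv
    omega
  have hAk0 : ((A k : ℤ) : ZMod P) ≠ 0 := by
    rw [hAj k le_rfl, if_pos rfl]
    exact neg_ne_zero.2 (inv_ne_zero hfacne)
  -- truncation of T
  have htrunc : lam ^ (k + 1) ∣ T - ∑ j ∈ range (k + 1), (A j : 𝓞 K) * lam ^ j := by
    have swap : ∑ j ∈ range (k + 1), (A j : 𝓞 K) * lam ^ j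
        = ∑ i ∈ range (P - 1), (w i : 𝓞 K)
            * ∑ j ∈ range (k + 1), (((u ^ i).choose j : ℕ) : 𝓞 K) * lam ^ j := by
      have e1 : ∀ j, (A j : 𝓞 K)
          = ∑ i ∈ range (P - 1), (w i : 𝓞 K) * (((u ^ i).choose j : ℕ) : 𝓞 K) := by
        intro j; rw [hA]; push_cast; rfl
      calc ∑ j ∈ range (k + 1), (A j : 𝓞 K) * lam ^ j
          = ∑ j ∈ range (k + 1), ∑ i ∈ range (P - 1),
              (w i : 𝓞 K) * ((((u ^ i).choose j : ℕ) : 𝓞 K) * lam ^ j) := by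
            refine Finset.sum_congr rfl fun j _ => ?_
            rw [e1, Finset.sum_mul]
            exact Finset.sum_congr rfl fun i _ => by ring
        _ = ∑ i ∈ range (P - 1), ∑ j ∈ range (k + 1),
              (w i : 𝓞 K) * ((((u ^ i).choose j : ℕ) : 𝓞 K) * lam ^ j) := Finset.sum_comm
        _ = _ := by
            refine Finset.sum_congr rfl fun i _ => ?_
            rw [Finset.mul_sum]
    rw [swap, hT, ← Finset.sum_sub_distrib]
    refine Finset.dvd_sum fun i _ => ?_
    have : (w i : 𝓞 K) * ζ ^ (u ^ i)
        - (w i : 𝓞 K) * ∑ j ∈ range (k + 1), (((u ^ i).choose j : ℕ) : 𝓞 K) * lam ^ j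
        = (w i : 𝓞 K) * ((1 + lam) ^ (u ^ i)
            - ∑ j ∈ range (k + 1), (((u ^ i).choose j : ℕ) : 𝓞 K) * lam ^ j) := by
      rw [← hζeq]; ring
    rw [this]
    exact (truncPow lam (k + 1) (u ^ i)).mul_left _
  have hsmall : lam ^ (k + 1) ∣ ∑ j ∈ range k, (A j : 𝓞 K) * lam ^ j := by
    refine Finset.dvd_sum fun j hj => ?_
    have hjk : j < k := Finset.mem_range.1 hj
    have hz : ((A j : ℤ) : ZMod P) = 0 := by
      rw [hAj j hjk.le, if_neg hjk.ne]
    obtain ⟨d, hd⟩ := (ZMod.intCast_zmod_eq_zero_iff_dvd _ _).1 hz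
    rw [hd]
    push_cast
    refine Dvd.dvd.mul_right (dvd_trans (pow_dvd_pow lam (by omega : k + 1 ≤ P - 1)) (hpdvd.mul_right _)) _
  have hTlead : lam ^ (k + 1) ∣ T - (A k : 𝓞 K) * lam ^ k := by
    have e := Finset.sum_range_succ (fun j => (A j : 𝓞 K) * lam ^ j) k
    have : T - (A k : 𝓞 K) * lam ^ k
        = (T - ∑ j ∈ range (k + 1), (A j : 𝓞 K) * lam ^ j)
          + ∑ j ∈ range k, (A j : 𝓞 K) * lam ^ j := by
      rw [e]; ring
    rw [this]
    exact dvd_add htrunc hsmall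
  -- sigma V ≡ μ V (mod lam^(P+1))
  set a0 : ℕ := (P + 1) / 2 with ha0
  have ha0b : 2 * a0 = P + 1 := by
    have hoddP : P % 2 = 1 := Nat.odd_iff.1 hodd
    rw [ha0]
    omega
  have hV0 : lam ^ a0 ∣ V := (hmem _ _).1 hV
  have hV2 : lam ^ (P + 1) ∣ V ^ 2 := by
    obtain ⟨y, hy⟩ := hV0
    rw [hy, mul_pow, ← pow_mul, mul_comm a0 2, ha0b]
    exact Dvd.dvd.mul_right dvd_rfl _
  have hσV : lam ^ (P + 1) ∣ σ V - (μ : 𝓞 K) * V := by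
    have e : σ V - (μ : 𝓞 K) * V = (σ C - C ^ μ) + ((1 + V) ^ μ - 1 - (μ : 𝓞 K) * V) := by
      rw [hC, map_add, map_one]
      ring
    rw [e]
    exact dvd_add ((hmem _ _).1 hσC) (dvd_trans hV2 (binomExpand V μ))
  have hσV' : lam ^ (P - 1) ∣ σ V - (μ : 𝓞 K) * V :=
    dvd_trans (pow_dvd_pow lam (by omega : P - 1 ≤ P + 1)) hσV
  have hkill := killLemma P u μ lam hlam0 (σ : 𝓞 K →+* 𝓞 K) hdig hint hlamP hσ2
  rcases lt_or_ge k a0 with hcase | hcase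
  · -- case 1 : V ≡ 0
    have hdigits : ∀ j, a0 ≤ j → j < P - 1 → (u : ZMod P) ^ j ≠ (μ : ZMod P) := by
      intro j hj1 hj2 heq
      rw [← hkμ] at heq
      have hd := hinjpow k j (by omega) heq.symm
      rcases Nat.eq_zero_or_pos (j - k) with h0 | h0
      · omega
      · have := Nat.le_of_dvd h0 hd
        omega
    have hVP : lam ^ (P - 1) ∣ V := hkill (P - 1) a0 (P - 1) (by omega) V hV0 hσV' hdigits
    refine ⟨0, 0, by simp, w, hwval, ?_⟩
    rw [hmem]
    have : C - (1 + ((0 : ℤ) : 𝓞 K) * ∑ i ∈ Finset.range (P - 1), (w i : 𝓞 K) * ζ ^ u ^ i)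
        = V := by
      rw [hC]
      push_cast
      ring
    rw [this]
    exact hVP
  · -- case 2 : leading digit matched by the resolvent
    have hdigits1 : ∀ j, a0 ≤ j → j < k → (u : ZMod P) ^ j ≠ (μ : ZMod P) := by
      intro j hj1 hj2 heq
      rw [← hkμ] at heq
      have hd := hinjpow j k (by omega) heq
      rcases Nat.eq_zero_or_pos (k - j) with h0 | h0
      · omega
      · have := Nat.le_of_dvd h0 hd
        omega
    have hVk : lam ^ k ∣ V := hkill k a0 k (by omega) V hV0
      (dvd_trans (pow_dvd_pow lam (by omega : k ≤ P + 1)) hσV) hdigits1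
    obtain ⟨Y, hY⟩ := hVk
    obtain ⟨a, ha⟩ := hdig Y
    have hVd : lam ^ (k + 1) ∣ V - (a : 𝓞 K) * lam ^ k := by
      have e : V - (a : 𝓞 K) * lam ^ k = lam ^ k * (Y - (a : 𝓞 K)) := by rw [hY]; ring
      rw [e, pow_succ]
      exact mul_dvd_mul dvd_rfl ha
    -- choose the constant c
    set e : ℤ := A k with he
    have he0 : ((e : ℤ) : ZMod P) ≠ 0 := hAk0
    set c : ℤ := ((((a : ZMod P) * ((e : ℤ) : ZMod P)⁻¹).val : ℕ) : ℤ) with hc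
    have hcval : ((c : ℤ) : ZMod P) = (a : ZMod P) * ((e : ℤ) : ZMod P)⁻¹ := by
      rw [hc]
      push_cast
      rw [ZMod.natCast_val, ZMod.cast_id]
    have hce : ((a - c * e : ℤ) : ZMod P) = 0 := by
      push_cast [hcval]
      rw [mul_assoc, inv_mul_cancel₀ he0, mul_one, sub_self]
    have hW1 : lam ^ (k + 1) ∣ V - (c : 𝓞 K) * T := by
      have eW : V - (c : 𝓞 K) * T
          = (V - (a : 𝓞 K) * lam ^ k) - (c : 𝓞 K) * (T - (e : 𝓞 K) * lam ^ k)
            + ((a - c * e : ℤ) : 𝓞 K) * lam ^ k := by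
        push_cast
        ring
      rw [eW]
      refine dvd_add (dvd_sub hVd (hTlead.mul_left _)) ?_
      obtain ⟨d, hd⟩ := (ZMod.intCast_zmod_eq_zero_iff_dvd _ _).1 hce
      rw [hd]
      push_cast
      rw [pow_succ']
      exact mul_dvd_mul (hlamP.mul_right d) dvd_rfl
    have hW2 : lam ^ (P - 1) ∣ σ (V - (c : 𝓞 K) * T) - (μ : 𝓞 K) * (V - (c : 𝓞 K) * T) := by
      have eW2 : σ (V - (c : 𝓞 K) * T) - (μ : 𝓞 K) * (V - (c : 𝓞 K) * T)
          = (σ V - (μ : 𝓞 K) * V) - (c : 𝓞 K) * (σ T - (μ : 𝓞 K) * T) := by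
        rw [map_sub, map_mul, map_intCast]
        ring
      rw [eW2]
      exact dvd_sub hσV' (hσT.mul_left _)
    have hdigits2 : ∀ j, k + 1 ≤ j → j < P - 1 → (u : ZMod P) ^ j ≠ (μ : ZMod P) := by
      intro j hj1 hj2 heq
      rw [← hkμ] at heq
      have hd := hinjpow k j (by omega) heq.symm
      rcases Nat.eq_zero_or_pos (j - k) with h0 | h0
      · omega
      · have := Nat.le_of_dvd h0 hd
        omega
    have hWP : lam ^ (P - 1) ∣ V - (c : 𝓞 K) * T :=
      hkill (P - 1) (k + 1) (P - 1) (by omega) _ hW1 hW2 hdigits2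
    refine ⟨-(c * ((μ : ℤ) - 1)), c, ?_, w, hwval, ?_⟩
    · push_cast
      ring
    · rw [hmem]
      have : C - (1 + (c : 𝓞 K) * ∑ i ∈ Finset.range (P - 1), (w i : 𝓞 K) * ζ ^ u ^ i)
          = V - (c : 𝓞 K) * T := by
        rw [hC, hT]
        ring
      rw [this]
      exact hWP
end

section
/- Let p be an odd prime, ζ a primitive p-th root of unity, σ(ζ) = ζ^u for a primitive root u mod p, and suppose 𝔟 is an ideal of ℤ[ζ] with 𝔟^p principal, 𝔟 not principal, and the class of σ(𝔟) equals the class of 𝔟^μ with μ ≡ u (mod p). Then, assuming the Stickelberger theorem (the element p·θ = Σ_{m=0}^{p-2} u^m σ^{-m} annihilates the class group), 𝔟 is principal — a contradiction; hence μ ≢ u (mod p) for any non-principal 𝔟 of order p whose class is annihilated by σ - μ. -/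
open NumberField Finset
open scoped nonZeroDivisors

/-- Assuming the Stickelberger theorem (the element `pθ = Σ_{m=0}^{p-2} u^m σ^{-m}`
annihilates the class group of `ℚ(ζ)`), no non-principal ideal `𝔟` of `ℤ[ζ]` with `𝔟^p`
principal can have its class annihilated by `σ - μ` with `μ ≡ u (mod p)`. -/
theorem stmt11 (p : ℕ+) (hp : (p : ℕ).Prime) (hodd : Odd (p : ℕ))
    (u : ℕ) (hu : orderOf (u : ZMod (p : ℕ)) = (p : ℕ) - 1)
    {K : Type*} [Field K] [NumberField K] [IsCyclotomicExtension {(p : ℕ)} ℚ K]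
    (ζ : 𝓞 K) (hζ : IsPrimitiveRoot ζ (p : ℕ))
    (σ : RingAut (𝓞 K)) (hσζ : σ ζ = ζ ^ u)
    (hStick : ∀ a : Ideal (𝓞 K),
      (∏ m ∈ Finset.range ((p : ℕ) - 1),
        (Ideal.map (RingEquiv.toRingHom (σ⁻¹ ^ m)) a) ^ (u ^ m)).IsPrincipal)
    (𝔟 : Ideal (𝓞 K)) (h𝔟p : (𝔟 ^ (p : ℕ)).IsPrincipal) (h𝔟 : ¬ 𝔟.IsPrincipal)
    (μ : ℕ)
    (hrel : ∃ x y : 𝓞 K, x ≠ 0 ∧ y ≠ 0 ∧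
      Ideal.span {x} * Ideal.map (RingEquiv.toRingHom σ) 𝔟 = Ideal.span {y} * 𝔟 ^ μ) :
    ¬ (μ ≡ u [MOD (p : ℕ)]) := by
  intro hmod
  have hbne : 𝔟 ≠ 0 := by
    rintro rfl
    exact h𝔟 ⟨0, (Submodule.span_zero_singleton _).symm⟩
  set J : ℕ → Ideal (𝓞 K) := fun m => Ideal.map (RingEquiv.toRingHom (σ⁻¹ ^ m)) 𝔟 with hJ
  have hJne : ∀ m, J m ≠ 0 := by
    intro m h
    exact hbne ((Ideal.map_eq_bot_iff_of_injective (RingEquiv.injective (σ⁻¹ ^ m))).mp h)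
  have hJmem : ∀ m, J m ∈ (Ideal (𝓞 K))⁰ := fun m =>
    mem_nonZeroDivisors_of_ne_zero (hJne m)
  set B : ℕ → (Ideal (𝓞 K))⁰ := fun m => ⟨J m, hJmem m⟩ with hB
  -- each J m ^ p is principal
  have hJp : ∀ m, ((J m) ^ (p : ℕ)).IsPrincipal := by
    intro m
    obtain ⟨a, ha⟩ := h𝔟p
    refine ⟨(σ⁻¹ ^ m) a, ?_⟩
    rw [hJ]
    simp only [← Ideal.map_pow]
    rw [ha]
    show Ideal.map _ (Ideal.span {a}) = _
    rw [Ideal.map_span, Set.image_singleton]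
    rfl
  have horder : ∀ m, ClassGroup.mk0 (B m) ^ (p : ℕ) = 1 := by
    intro m
    rw [← map_pow, ClassGroup.mk0_eq_one_iff]
    exact hJp m
  -- relation in the class group
  obtain ⟨x, y, hx, hy, hxy⟩ := hrel
  have key : ∀ m, ClassGroup.mk0 (B m) = ClassGroup.mk0 (B (m + 1)) ^ u := by
    intro m
    have hmap := congrArg (Ideal.map (RingEquiv.toRingHom (σ⁻¹ ^ (m + 1)))) hxy
    rw [Ideal.map_mul, Ideal.map_mul, Ideal.map_pow, Ideal.map_map] at hmap
    have hcomp : Ideal.map ((RingEquiv.toRingHom (σ⁻¹ ^ (m + 1))).comp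
        (RingEquiv.toRingHom σ)) 𝔟 = J m := by
      rw [hJ]
      congr 1
      refine RingHom.ext fun z => ?_
      show (σ⁻¹ ^ (m + 1)) (σ z) = (σ⁻¹ ^ m) z
      have haut : σ⁻¹ ^ (m + 1) * σ = σ⁻¹ ^ m := by group
      calc (σ⁻¹ ^ (m + 1)) (σ z) = (σ⁻¹ ^ (m + 1) * σ) z := rfl
        _ = (σ⁻¹ ^ m) z := by rw [haut]
    rw [hcomp] at hmap
    simp only [Ideal.map_span, Set.image_singleton] at hmap
    have h1 : ClassGroup.mk0 (B m) = ClassGroup.mk0 (B (m + 1)) ^ μ := by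
      have : ClassGroup.mk0 (B m) = ClassGroup.mk0 (B (m + 1) ^ μ) := by
        rw [ClassGroup.mk0_eq_mk0_iff]
        refine ⟨(σ⁻¹ ^ (m + 1)) x, (σ⁻¹ ^ (m + 1)) y, ?_, ?_, ?_⟩
        · simpa using hx
        · simpa using hy
        · exact hmap
      rw [this, map_pow]
    rw [h1]
    have hdvd : orderOf (ClassGroup.mk0 (B (m + 1))) ∣ (p : ℕ) :=
      orderOf_dvd_of_pow_eq_one (horder (m + 1))
    exact pow_eq_pow_iff_modEq.mpr (hmod.of_dvd hdvd)
  have keypow : ∀ m, ClassGroup.mk0 (B 0) = ClassGroup.mk0 (B m) ^ (u ^ m) := by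
    intro m
    induction m with
    | zero => simp
    | succ n ih => rw [ih, key n, ← pow_mul, pow_succ, Nat.mul_comm]
  -- the Stickelberger product
  have hprod : ClassGroup.mk0 (∏ m ∈ Finset.range ((p : ℕ) - 1), (B m) ^ (u ^ m)) = 1 := by
    rw [ClassGroup.mk0_eq_one_iff]
    have : ((∏ m ∈ Finset.range ((p : ℕ) - 1), (B m) ^ (u ^ m) : (Ideal (𝓞 K))⁰) :
        Ideal (𝓞 K)) = ∏ m ∈ Finset.range ((p : ℕ) - 1), (J m) ^ (u ^ m) := by
      push_cast
      rfl
    rw [this]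
    exact hStick 𝔟
  rw [map_prod] at hprod
  simp only [map_pow] at hprod
  have hprod2 : ClassGroup.mk0 (B 0) ^ ((p : ℕ) - 1) = 1 := by
    rw [← hprod, Finset.prod_congr rfl fun m _ => (keypow m).symm]
    simp
  -- gcd argument: p and p-1
  have h1 : ClassGroup.mk0 (B 0) = 1 := by
    have := horder 0
    have hp1 : (p : ℕ) = ((p : ℕ) - 1) + 1 := (Nat.succ_pred_eq_of_pos p.2).symm
    rw [hp1, pow_succ, hprod2, one_mul] at this
    exact this
  have : 𝔟.IsPrincipal := by
    have hB0 : (B 0 : Ideal (𝓞 K)) = 𝔟 := by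
      show J 0 = 𝔟
      rw [hJ]
      show Ideal.map (RingEquiv.toRingHom (1 : RingAut (𝓞 K))) 𝔟 = 𝔟
      have : RingEquiv.toRingHom (1 : RingAut (𝓞 K)) = RingHom.id _ := rfl
      rw [this, Ideal.map_id]
    rw [← hB0]
    exact (ClassGroup.mk0_eq_one_iff (B 0).2).mp h1
  exact h𝔟 this
end

section
/- Let p be an odd prime, ζ a primitive p-th root of unity, π = (ζ-1)ℤ[ζ], and let C₁,…,C_n ∈ ℚ(ζ) with v_π(C_i) = 0 and v_π(C_i - 1) = 2m_i + 1 where the integers 2m_i+1 < p are pairwise distinct. Then for any exponents α_i ∈ {1,…,p-1}, the product C = C₁^{α₁}⋯C_n^{α_n} satisfies v_π(C - 1) = min_i(2m_i + 1) < p; in particular C ≢ 1 (mod π^p). -/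
open NumberField Finset

/-- Exact-divisibility of a sum of elements with distinct exact valuations. -/
lemma aux_ed_add {R : Type*} [CommRing R] {q x y : R} {a b : ℕ}
    (hxa : q ^ a ∣ x) (hxa' : ¬ q ^ (a + 1) ∣ x) (hyb : q ^ b ∣ y) (hab : a < b) :
    q ^ a ∣ x + y ∧ ¬ q ^ (a + 1) ∣ x + y := by
  refine ⟨dvd_add hxa ((pow_dvd_pow q hab.le).trans hyb), fun h => hxa' ?_⟩
  have hy : q ^ (a + 1) ∣ y := (pow_dvd_pow q (by omega)).trans hyb
  simpa using dvd_sub h hy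

/-- Exact-divisibility of `a^α - d^α` given that of `a - d`. -/
lemma aux_ed_pow {R : Type*} [CommRing R] [IsDomain R] {q a d : R} (hq : Prime q)
    {k α : ℕ} (hk : 1 ≤ k) (hα : ¬ q ∣ (α : R)) (hd : ¬ q ∣ d)
    (h1 : q ^ k ∣ a - d) (h2 : ¬ q ^ (k + 1) ∣ a - d) :
    q ^ k ∣ a ^ α - d ^ α ∧ ¬ q ^ (k + 1) ∣ a ^ α - d ^ α := by
  have hfac : (∑ i ∈ Finset.range α, a ^ i * d ^ (α - 1 - i)) * (a - d) = a ^ α - d ^ α :=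
    geom_sum₂_mul a d α
  set S := ∑ i ∈ Finset.range α, a ^ i * d ^ (α - 1 - i) with hS
  have hqad : q ∣ a - d := (dvd_pow_self q (by omega : k ≠ 0)).trans h1
  have hSnd : ¬ q ∣ S := by
    intro hdvd
    have key : ∀ i ∈ Finset.range α, d ^ i * d ^ (α - 1 - i) = d ^ (α - 1) := by
      intro i hi
      rw [← pow_add]
      congr 1
      simp only [Finset.mem_range] at hi
      omega
    have e1 : (α : R) * d ^ (α - 1) = ∑ i ∈ Finset.range α, d ^ i * d ^ (α - 1 - i) := by
      rw [Finset.sum_congr rfl key, Finset.sum_const, Finset.card_range, nsmul_eq_mul]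
    have e2 : S - (α : R) * d ^ (α - 1) =
        ∑ i ∈ Finset.range α, (a ^ i - d ^ i) * d ^ (α - 1 - i) := by
      rw [hS, e1, ← Finset.sum_sub_distrib]
      exact Finset.sum_congr rfl (fun i _ => (sub_mul _ _ _).symm)
    have hdiff : q ∣ S - (α : R) * d ^ (α - 1) := by
      rw [e2]
      exact Finset.dvd_sum fun i _ =>
        dvd_mul_of_dvd_left (hqad.trans (sub_dvd_pow_sub_pow a d i)) _
    have hfin : q ∣ (α : R) * d ^ (α - 1) := by
      have := dvd_sub hdvd hdiff
      simpa using this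
    rcases hq.dvd_mul.mp hfin with h | h
    · exact hα h
    · exact hd (hq.dvd_of_dvd_pow h)
  constructor
  · rw [← hfac]; exact Dvd.dvd.mul_left h1 S
  · intro h
    apply h2
    refine hq.pow_dvd_of_dvd_mul_right (k + 1) hSnd ?_
    rw [mul_comm]; rwa [hfac]

/-- Exact-divisibility of a difference of products with pairwise distinct exact valuations. -/
lemma aux_ed_prod {R : Type*} [CommRing R] [IsDomain R] {q : R} (hq : Prime q)
    {ι : Type*} [DecidableEq ι] (k : ι → ℕ) (A D : ι → R) :
    ∀ (s : Finset ι) (hs : s.Nonempty),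
    (∀ i ∈ s, 1 ≤ k i) → (∀ i ∈ s, ¬ q ∣ D i) →
    (∀ i ∈ s, q ^ (k i) ∣ A i - D i ∧ ¬ q ^ (k i + 1) ∣ A i - D i) →
    (∀ i ∈ s, ∀ j ∈ s, i ≠ j → k i ≠ k j) →
    q ^ (s.inf' hs k) ∣ ∏ i ∈ s, A i - ∏ i ∈ s, D i ∧
      ¬ q ^ (s.inf' hs k + 1) ∣ ∏ i ∈ s, A i - ∏ i ∈ s, D i := by
  intro s hs
  induction hs using Finset.Nonempty.cons_induction with
  | singleton i =>
    intro _ _ hED _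
    simpa using hED i (Finset.mem_singleton_self i)
  | cons i t hit ht IH =>
    intro hk1 hD hED hinj
    have hk1t : ∀ j ∈ t, 1 ≤ k j := fun j hj => hk1 j (Finset.mem_cons_of_mem hj)
    have hDt : ∀ j ∈ t, ¬ q ∣ D j := fun j hj => hD j (Finset.mem_cons_of_mem hj)
    have hEDt : ∀ j ∈ t, q ^ (k j) ∣ A j - D j ∧ ¬ q ^ (k j + 1) ∣ A j - D j :=
      fun j hj => hED j (Finset.mem_cons_of_mem hj)
    have hinjt : ∀ a ∈ t, ∀ b ∈ t, a ≠ b → k a ≠ k b := fun a ha b hb =>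
      hinj a (Finset.mem_cons_of_mem ha) b (Finset.mem_cons_of_mem hb)
    have IH' := IH hk1t hDt hEDt hinjt
    have hEDi := hED i (Finset.mem_cons_self i t)
    have hki : 1 ≤ k i := hk1 i (Finset.mem_cons_self i t)
    have hDi : ¬ q ∣ D i := hD i (Finset.mem_cons_self i t)
    have hAi : ¬ q ∣ A i := by
      intro h
      have hq1 : q ∣ A i - D i := (dvd_pow_self q (by omega : k i ≠ 0)).trans hEDi.1
      exact hDi (by simpa using dvd_sub h hq1)
    have hPD : ¬ q ∣ ∏ j ∈ t, D j := by
      intro h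
      obtain ⟨j, hj, hdj⟩ := hq.exists_mem_finset_dvd h
      exact hDt j hj hdj
    set Kt := t.inf' ht k with hKt
    obtain ⟨j, hjt, hKtj⟩ := Finset.exists_mem_eq_inf' ht k
    have hij : i ≠ j := fun h => hit (h ▸ hjt)
    have hkiKt : k i ≠ Kt := by
      rw [hKt, hKtj]
      exact hinj i (Finset.mem_cons_self i t) j (Finset.mem_cons_of_mem hjt) hij
    have hsplit : ∏ x ∈ Finset.cons i t hit, A x - ∏ x ∈ Finset.cons i t hit, D x =
        A i * (∏ x ∈ t, A x - ∏ x ∈ t, D x) + (A i - D i) * ∏ x ∈ t, D x := by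
      rw [Finset.prod_cons, Finset.prod_cons]; ring
    -- first term: exact valuation Kt; second: exact valuation k i
    have hT1 : q ^ Kt ∣ A i * (∏ x ∈ t, A x - ∏ x ∈ t, D x) ∧
        ¬ q ^ (Kt + 1) ∣ A i * (∏ x ∈ t, A x - ∏ x ∈ t, D x) := by
      refine ⟨Dvd.dvd.mul_left IH'.1 _, fun h => IH'.2 ?_⟩
      exact hq.pow_dvd_of_dvd_mul_left (Kt + 1) hAi h
    have hT2 : q ^ (k i) ∣ (A i - D i) * ∏ x ∈ t, D x ∧
        ¬ q ^ (k i + 1) ∣ (A i - D i) * ∏ x ∈ t, D x := by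
      refine ⟨Dvd.dvd.mul_right hEDi.1 _, fun h => hEDi.2 ?_⟩
      exact hq.pow_dvd_of_dvd_mul_right (k i + 1) hPD h
    have hinf : (Finset.cons i t hit).inf' (Finset.cons_nonempty hit) k = min (k i) Kt := by
      rw [Finset.inf'_cons]
    rw [hsplit, hinf]
    rcases lt_or_gt_of_ne hkiKt with hlt | hgt
    · rw [min_eq_left hlt.le, add_comm (A i * _)]
      exact aux_ed_add hT2.1 hT2.2 hT1.1 hlt
    · rw [min_eq_right hgt.le]
      exact aux_ed_add hT1.1 hT1.2 hT2.1 hgt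

/-- `PiCongr` is antitone in the exponent. -/
lemma piCongr_mono {K : Type*} [Field K] [NumberField K]
    {π : Ideal (𝓞 K)} {j j' : ℕ} (h : j' ≤ j) {x y : K} (hc : PiCongr π j x y) :
    PiCongr π j' x y := by
  obtain ⟨a, b, d, hd, h1, h2, h3⟩ := hc
  exact ⟨a, b, d, hd, h1, h2, Ideal.pow_le_pow_right h h3⟩

/-- If `C₁, …, C_n ∈ ℚ(ζ)` have `v_π(C_i) = 0` and `v_π(C_i - 1) = 2m_i + 1` with
pairwise distinct exponents `2m_i + 1 < p`, then for any exponents `α_i ∈ {1, …, p-1}`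
the product `C = ∏ C_i^{α_i}` satisfies `v_π(C - 1) = min_i (2m_i + 1) < p`;
in particular `C ≢ 1 (mod π^p)`. -/
theorem stmt14 (p : ℕ+) (hp : (p : ℕ).Prime) (hodd : Odd (p : ℕ))
    {K : Type*} [Field K] [NumberField K] [IsCyclotomicExtension {(p : ℕ)} ℚ K]
    (ζ : 𝓞 K) (hζ : IsPrimitiveRoot ζ (p : ℕ))
    (π : Ideal (𝓞 K)) (hπ : π = Ideal.span {ζ - 1})
    (n : ℕ) (hn : 0 < n) (C : Fin n → K) (m : Fin n → ℕ)
    (hval : ∀ i, PiValZero π (C i))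
    (hlt : ∀ i, 2 * m i + 1 < (p : ℕ))
    (hexact : ∀ i, PiCongr π (2 * m i + 1) (C i) 1 ∧ ¬ PiCongr π (2 * m i + 2) (C i) 1)
    (hdist : ∀ i j, i ≠ j → m i ≠ m j)
    (α : Fin n → ℕ) (hα1 : ∀ i, 1 ≤ α i) (hα2 : ∀ i, α i ≤ (p : ℕ) - 1) :
    PiCongr π (Finset.univ.inf' ⟨⟨0, hn⟩, Finset.mem_univ _⟩ (fun i => 2 * m i + 1))
        (∏ i, C i ^ α i) 1 ∧
      ¬ PiCongr π ((Finset.univ.inf' ⟨⟨0, hn⟩, Finset.mem_univ _⟩ (fun i => 2 * m i + 1)) + 1)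
        (∏ i, C i ^ α i) 1 ∧
      ¬ PiCongr π (p : ℕ) (∏ i, C i ^ α i) 1 := by
  haveI : Fact (Nat.Prime (p : ℕ)) := ⟨hp⟩
  have hinj : Function.Injective (algebraMap (𝓞 K) K) := RingOfIntegers.coe_injective
  set ι := algebraMap (𝓞 K) K with hι
  -- the prime element
  set q : 𝓞 K := ζ - 1 with hqdef
  have hζK : IsPrimitiveRoot (ι ζ) (p : ℕ) := hζ.map_of_injective hinj
  have hprime : Prime q := by
    have h1 := hζK.zeta_sub_one_prime'
    have h2 : hζK.toInteger = ζ := hinj rfl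
    rwa [h2] at h1
  -- membership in powers of π as divisibility
  have hmem : ∀ (x : 𝓞 K) (j : ℕ), x ∈ π ^ j ↔ q ^ j ∣ x := by
    intro x j
    rw [hπ, Ideal.span_singleton_pow, Ideal.mem_span_singleton]
  have hmem1 : ∀ x : 𝓞 K, x ∈ π ↔ q ∣ x := by
    intro x; rw [hπ, Ideal.mem_span_singleton]
  -- q divides p
  have hqp : q ∣ ((p : ℕ) : 𝓞 K) := by
    have hzne : ζ ≠ 1 := hζ.ne_one hp.one_lt
    have hqne : q ≠ 0 := sub_ne_zero.mpr hzne
    have hsum : (∑ i ∈ Finset.range (p : ℕ), ζ ^ i) = 0 := by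
      have hgeo : (∑ i ∈ Finset.range (p : ℕ), ζ ^ i) * (ζ - 1) = ζ ^ (p : ℕ) - 1 :=
        geom_sum_mul ζ (p : ℕ)
      rw [hζ.pow_eq_one, sub_self] at hgeo
      exact (mul_eq_zero.mp hgeo).resolve_right hqne
    have hpeq : ((p : ℕ) : 𝓞 K) = ∑ i ∈ Finset.range (p : ℕ), (1 - ζ ^ i) := by
      rw [Finset.sum_sub_distrib, hsum, sub_zero, Finset.sum_const, Finset.card_range,
        nsmul_eq_mul, mul_one]
    rw [hpeq]
    refine Finset.dvd_sum fun i _ => ?_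
    have h1 : ζ - 1 ∣ ζ ^ i - 1 ^ i := sub_dvd_pow_sub_pow ζ 1 i
    rw [one_pow] at h1
    rw [show (1 : 𝓞 K) - ζ ^ i = -(ζ ^ i - 1) by ring]
    exact dvd_neg.mpr h1
  -- q does not divide the exponents
  have hqα : ∀ i, ¬ q ∣ ((α i : ℕ) : 𝓞 K) := by
    intro i hdvd
    have hpa : ¬ (p : ℕ) ∣ α i := by
      have h1 := hα1 i; have h2 := hα2 i; have h3 := hp.two_le
      intro h
      have := Nat.le_of_dvd (by omega) h
      omega
    have hcop : Nat.gcd (p : ℕ) (α i) = 1 := (Nat.Prime.coprime_iff_not_dvd hp).mpr hpa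
    have hbez := Nat.gcd_eq_gcd_ab (p : ℕ) (α i)
    rw [hcop] at hbez
    have hcast := congrArg (fun z : ℤ => (z : 𝓞 K)) hbez
    push_cast at hcast
    have hone : q ∣ (1 : 𝓞 K) := by
      rw [hcast]
      exact dvd_add (Dvd.dvd.mul_right hqp _) (Dvd.dvd.mul_right hdvd _)
    exact hprime.not_unit (isUnit_of_dvd_one hone)
  -- extract exact representations of each `C i`
  have hrep : ∀ i, ∃ a d : 𝓞 K, ¬ q ∣ d ∧ C i * ι d = ι a ∧
      q ^ (2 * m i + 1) ∣ a - d ∧ ¬ q ^ (2 * m i + 1 + 1) ∣ a - d := by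
    intro i
    obtain ⟨a, b, d, hd, h1, h2, h3⟩ := (hexact i).1
    have hbd : b = d := by
      apply hinj
      rw [← h2, one_mul]
    subst hbd
    refine ⟨a, b, (hmem1 b).not.mp hd, h1, (hmem _ _).mp h3, fun hcon => (hexact i).2 ?_⟩
    refine ⟨a, b, b, hd, h1, one_mul _, (hmem _ _).mpr ?_⟩
    have he : 2 * m i + 2 = 2 * m i + 1 + 1 := by omega
    rw [he]
    exact hcon
  choose a d hd h1 h2 h3 using hrep
  set k : Fin n → ℕ := fun i => 2 * m i + 1 with hk
  set A : Fin n → 𝓞 K := fun i => a i ^ α i with hA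
  set D : Fin n → 𝓞 K := fun i => d i ^ α i with hD
  have hDnd : ∀ i, ¬ q ∣ D i := fun i h => hd i (hprime.dvd_of_dvd_pow h)
  have hEDi : ∀ i, q ^ (k i) ∣ A i - D i ∧ ¬ q ^ (k i + 1) ∣ A i - D i := fun i =>
    aux_ed_pow hprime (Nat.le_add_left 1 (2 * m i)) (hqα i) (hd i) (h2 i) (h3 i)
  have hne : (Finset.univ : Finset (Fin n)).Nonempty := ⟨⟨0, hn⟩, Finset.mem_univ _⟩
  set kmin := Finset.univ.inf' hne k with hkmin
  have hED : q ^ kmin ∣ ∏ i, A i - ∏ i, D i ∧ ¬ q ^ (kmin + 1) ∣ ∏ i, A i - ∏ i, D i := by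
    refine aux_ed_prod hprime k A D Finset.univ hne (fun i _ => by show 1 ≤ 2 * m i + 1; omega)
      (fun i _ => hDnd i) (fun i _ => hEDi i) (fun i _ j _ hij => ?_)
    have := hdist i j hij
    show 2 * m i + 1 ≠ 2 * m j + 1
    omega
  -- the K-level identity for the product
  have hxD : (∏ i, C i ^ α i) * ι (∏ i, D i) = ι (∏ i, A i) := by
    rw [map_prod, map_prod, ← Finset.prod_mul_distrib]
    refine Finset.prod_congr rfl fun i _ => ?_
    rw [hA, hD]
    simp only [map_pow, ← mul_pow, h1 i]
  have hPDnd : ¬ q ∣ ∏ i, D i := by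
    intro h
    obtain ⟨j, _, hdj⟩ := hprime.exists_mem_finset_dvd h
    exact hDnd j hdj
  -- the negative statement at `kmin + 1`
  have hneg : ¬ PiCongr π (kmin + 1) (∏ i, C i ^ α i) 1 := by
    rintro ⟨a', b', d', hd', h1', h2', h3'⟩
    have hbd : b' = d' := by
      apply hinj
      rw [← h2', one_mul]
    subst hbd
    have hd'q : ¬ q ∣ b' := (hmem1 b').not.mp hd'
    have hcross : (a' - b') * ∏ i, D i = (∏ i, A i - ∏ i, D i) * b' := by
      apply hinj
      rw [map_mul, map_mul, map_sub, map_sub, ← h1', ← hxD]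
      ring
    have hdvd : q ^ (kmin + 1) ∣ (∏ i, A i - ∏ i, D i) * b' := by
      rw [← hcross]
      exact Dvd.dvd.mul_right ((hmem _ _).mp h3') _
    exact hED.2 (hprime.pow_dvd_of_dvd_mul_right (kmin + 1) hd'q hdvd)
  refine ⟨?_, hneg, ?_⟩
  · exact ⟨∏ i, A i, ∏ i, D i, ∏ i, D i, (hmem1 _).not.mpr hPDnd, hxD, one_mul _,
      (hmem _ _).mpr hED.1⟩
  · intro hcon
    apply hneg
    refine piCongr_mono ?_ hcon
    obtain ⟨i0, _, hi0⟩ := Finset.exists_mem_eq_inf' hne k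
    have h0 := hlt i0
    have hle : Finset.univ.inf' hne k ≤ k i0 := le_of_eq hi0
    have he : k i0 = 2 * m i0 + 1 := rfl
    omega
end

section
/- Let p be an odd prime, ζ a primitive p-th root of unity, σ an automorphism of ℚ(ζ) generating the Galois group with σ^{p-1} = id. Suppose B′ ∈ ℚ(ζ)* satisfies (B′)^{(σ-μ)²} ∈ (ℚ(ζ)*)^p and (B′)^{σ^{p-1} - 1} = 1, where μ ∈ ℤ with μ^{p-1} ≡ 1 (mod p) and (U-μ)² does not divide U^{p-1}-1 in 𝔽_p[U]. Then (B′)^{σ-μ} ∈ (ℚ(ζ)*)^p, i.e., σ(B′) = (B′)^μ · α^p for some α ∈ ℚ(ζ)*. -/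
open NumberField Polynomial

lemma bezout_aux {k : Type*} [Field k] (μ : k) (n : ℕ)
    (h2 : ¬ ((X - C μ) ^ 2 ∣ X ^ n - 1)) (hroot : μ ^ n = 1) :
    ∃ a b : k[X], a * (X - C μ) ^ 2 + b * (X ^ n - 1) = X - C μ := by
  classical
  set π : k[X] := X - C μ with hπdef
  have hπ : Irreducible π := irreducible_X_sub_C μ
  have hπ0 : π ≠ 0 := X_sub_C_ne_zero μ
  have hdvd : π ∣ X ^ n - 1 := by
    rw [hπdef, dvd_iff_isRoot]
    simp [IsRoot, hroot]
  set d : k[X] := EuclideanDomain.gcd (π ^ 2) (X ^ n - 1) with hd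
  have hπd : π ∣ d := EuclideanDomain.dvd_gcd (dvd_pow dvd_rfl two_ne_zero) hdvd
  obtain ⟨e, he⟩ := hπd
  have hdl : d ∣ π ^ 2 := EuclideanDomain.gcd_dvd_left _ _
  have hdr : d ∣ X ^ n - 1 := EuclideanDomain.gcd_dvd_right _ _
  have heπ : e ∣ π := by
    have : π * e ∣ π * π := by rw [← he, ← pow_two]; exact hdl
    exact (mul_dvd_mul_iff_left hπ0).mp this
  obtain ⟨t, ht⟩ := heπ
  have hcase := hπ.isUnit_or_isUnit ht
  rcases hcase with hu | hu
  · obtain ⟨ε, hε⟩ := hu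
    have hgab := EuclideanDomain.gcd_eq_gcd_ab (π ^ 2) (X ^ n - 1)
    refine ⟨(↑ε⁻¹ : k[X]) * EuclideanDomain.gcdA (π ^ 2) (X ^ n - 1),
      (↑ε⁻¹ : k[X]) * EuclideanDomain.gcdB (π ^ 2) (X ^ n - 1), ?_⟩
    have : π = d * (↑ε⁻¹ : k[X]) := by
      rw [he, ← hε, mul_assoc]
      simp
    calc ↑ε⁻¹ * EuclideanDomain.gcdA (π ^ 2) (X ^ n - 1) * π ^ 2 +
        ↑ε⁻¹ * EuclideanDomain.gcdB (π ^ 2) (X ^ n - 1) * (X ^ n - 1)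
        = (π ^ 2 * EuclideanDomain.gcdA (π ^ 2) (X ^ n - 1) +
            (X ^ n - 1) * EuclideanDomain.gcdB (π ^ 2) (X ^ n - 1)) * ↑ε⁻¹ := by ring
      _ = d * ↑ε⁻¹ := by rw [← hgab, hd]
      _ = π := this.symm
  · exfalso
    apply h2
    obtain ⟨v, hv⟩ := hu
    have hπe : π ∣ e := ⟨↑v⁻¹, by rw [ht, ← hv, mul_assoc]; simp⟩
    have : π ^ 2 ∣ d := by
      obtain ⟨s, hs⟩ := hπe
      rw [he, hs, pow_two]
      exact ⟨s, by ring⟩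
    exact this.trans hdr

lemma lift_aux (p : ℕ) [Fact p.Prime] (μ : ℤ) (n : ℕ)
    (hbez : ∃ a b : (ZMod p)[X],
      a * (X - C (μ : ZMod p)) ^ 2 + b * (X ^ n - 1) = X - C (μ : ZMod p)) :
    ∃ A B R : ℤ[X], A * (X - C μ) ^ 2 + B * (X ^ n - 1) = (X - C μ) + C (p : ℤ) * R := by
  obtain ⟨a, b, hab⟩ := hbez
  have hsurj : Function.Surjective (Polynomial.map (Int.castRingHom (ZMod p))) :=
    Polynomial.map_surjective _ ZMod.intCast_surjective
  obtain ⟨A, hA⟩ := hsurj a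
  obtain ⟨B, hB⟩ := hsurj b
  set q : ℤ[X] := A * (X - C μ) ^ 2 + B * (X ^ n - 1) - (X - C μ) with hq
  have hmapq : q.map (Int.castRingHom (ZMod p)) = 0 := by
    simp only [hq, Polynomial.map_sub, Polynomial.map_add, Polynomial.map_mul,
      Polynomial.map_pow, Polynomial.map_one, map_X, map_C, hA, hB]
    have : ((Int.castRingHom (ZMod p)) μ) = (μ : ZMod p) := rfl
    rw [this, sub_eq_zero]
    exact hab
  have hdvd : C (p : ℤ) ∣ q := by
    rw [Polynomial.C_dvd_iff_dvd_coeff]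
    intro i
    have : (q.coeff i : ZMod p) = 0 := by
      have := congrArg (fun r => Polynomial.coeff r i) hmapq
      simpa [Polynomial.coeff_map] using this
    exact_mod_cast (ZMod.intCast_zmod_eq_zero_iff_dvd _ _).mp this
  obtain ⟨R, hR⟩ := hdvd
  exact ⟨A, B, R, by rw [← hR]; ring⟩

section ModulePart

variable {K : Type*} [Field K] [Algebra ℚ K]

noncomputable def phiOf (σ : K ≃ₐ[ℚ] K) : Module.End ℤ (Additive Kˣ) :=
  (MonoidHom.toAdditive (Units.map (σ : K →* K))).toIntLinearMap

lemma phiOf_apply (σ : K ≃ₐ[ℚ] K) (a : Additive Kˣ) :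
    ((Additive.toMul (phiOf σ a) : Kˣ) : K) = σ ((Additive.toMul a : Kˣ) : K) := rfl

lemma phiOf_pow_apply (σ : K ≃ₐ[ℚ] K) (m : ℕ) (a : Additive Kˣ) :
    ((Additive.toMul ((phiOf σ ^ m) a) : Kˣ) : K) = (σ ^ m) ((Additive.toMul a : Kˣ) : K) := by
  induction m with
  | zero => simp
  | succ m ih =>
    rw [pow_succ', Module.End.mul_apply, phiOf_apply, ih, pow_succ']
    rfl

lemma addunits_ext {x y : Additive Kˣ}
    (h : ((Additive.toMul x : Kˣ) : K) = ((Additive.toMul y : Kˣ) : K)) : x = y :=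
  Additive.toMul.injective (Units.ext h)

lemma val_add (x y : Additive Kˣ) :
    ((Additive.toMul (x + y) : Kˣ) : K) =
      ((Additive.toMul x : Kˣ) : K) * ((Additive.toMul y : Kˣ) : K) := rfl

lemma val_zsmul (m : ℤ) (x : Additive Kˣ) :
    ((Additive.toMul (m • x) : Kˣ) : K) = ((Additive.toMul x : Kˣ) : K) ^ m := by
  rw [toMul_zsmul]
  exact Units.val_zpow_eq_zpow_val _ _

end ModulePart

/-- If `B′ ∈ ℚ(ζ)*` satisfies `(B′)^{(σ-μ)²} ∈ (ℚ(ζ)*)^p` (written multiplicatively: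
`σ²(B′)·σ(B′)^{-2μ}·(B′)^{μ²}` is a `p`-th power) and `(B′)^{σ^{p-1}-1} = 1`, where
`μ^{p-1} ≡ 1 (mod p)` and `(U-μ)²` does not divide `U^{p-1}-1` in `𝔽_p[U]`, then
`(B′)^{σ-μ} ∈ (ℚ(ζ)*)^p`, i.e. `σ(B′) = (B′)^μ·α^p` for some `α ∈ ℚ(ζ)*`. -/
theorem stmt15 (p : ℕ+) (hp : (p : ℕ).Prime) (hodd : Odd (p : ℕ))
    {K : Type*} [Field K] [NumberField K] [IsCyclotomicExtension {(p : ℕ)} ℚ K]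
    (ζ : K) (hζ : IsPrimitiveRoot ζ (p : ℕ))
    (σ : K ≃ₐ[ℚ] K) (hσgen : ∀ τ : K ≃ₐ[ℚ] K, τ ∈ Subgroup.zpowers σ)
    (hσord : σ ^ ((p : ℕ) - 1) = 1)
    (μ : ℤ) (hμ : (μ : ZMod (p : ℕ)) ^ ((p : ℕ) - 1) = 1)
    (hμ2 : ¬ ((X - C (μ : ZMod (p : ℕ))) ^ 2 ∣ X ^ ((p : ℕ) - 1) - 1))
    (B' : K) (hB' : B' ≠ 0)
    (hfix : (σ ^ ((p : ℕ) - 1)) B' = B')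
    (hsq : ∃ c : K, c ≠ 0 ∧ σ (σ B') * (σ B') ^ (-(2 * μ)) * B' ^ (μ ^ 2) = c ^ (p : ℕ)) :
    ∃ α : K, α ≠ 0 ∧ σ B' = B' ^ μ * α ^ (p : ℕ) := by
  classical
  haveI : Fact (p : ℕ).Prime := ⟨hp⟩
  obtain ⟨c, hc0, hcsq⟩ := hsq
  set n : ℕ := (p : ℕ) - 1 with hn
  obtain ⟨A0, B0, R, hABR⟩ := lift_aux (p : ℕ) μ n (bezout_aux (μ : ZMod (p : ℕ)) n hμ2 hμ)
  set φ : Module.End ℤ (Additive Kˣ) := phiOf σ with hφ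
  set E : ℤ[X] →ₐ[ℤ] Module.End ℤ (Additive Kˣ) := Polynomial.aeval φ with hE
  set b : Additive Kˣ := Additive.ofMul (Units.mk0 B' hB') with hb
  set cu : Additive Kˣ := Additive.ofMul (Units.mk0 c hc0) with hcu
  -- (X^n - 1) kills b
  have hEg : E (X ^ n - 1) b = 0 := by
    have h1 : E (X ^ n - 1) = φ ^ n - 1 := by
      rw [map_sub, map_pow, aeval_X, map_one]
    have h2 : (φ ^ n) b = b := by
      apply addunits_ext
      rw [hφ, phiOf_pow_apply]
      exact hfix
    rw [h1, LinearMap.sub_apply, h2, Module.End.one_apply, sub_self]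
  -- ((X - C μ)^2) sends b to p • cu
  have hEf : E ((X - C μ) ^ 2) b = ((p : ℕ) : ℤ) • cu := by
    have hpoly : ((X : ℤ[X]) - C μ) ^ 2 = X * X + C (-(2 * μ)) * X + C (μ ^ 2) := by
      simp only [C_neg, C_mul, C_pow, map_ofNat]
      ring
    have h1 : E ((X - C μ) ^ 2) b =
        φ (φ b) + (-(2 * μ)) • (φ b) + (μ ^ 2) • b := by
      rw [hpoly]
      simp only [hE, map_add, map_mul, aeval_X, aeval_C, LinearMap.add_apply,
        Module.End.mul_apply, Module.algebraMap_end_apply]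
    apply addunits_ext
    rw [h1, val_add, val_add, val_zsmul, val_zsmul, val_zsmul]
    rw [hφ, phiOf_apply, phiOf_apply]
    have hbval : ((Additive.toMul b : Kˣ) : K) = B' := rfl
    have hcval : ((Additive.toMul cu : Kˣ) : K) = c := rfl
    rw [hbval, hcval, hcsq]
    rw [zpow_natCast]
  -- combine via the Bezout identity
  have hkey := congrArg (fun q : ℤ[X] => E q b) hABR
  simp only [hE, map_add, map_mul, LinearMap.add_apply, Module.End.mul_apply, aeval_C,
    Module.algebraMap_end_apply, hEf, hEg, map_zero, add_zero, map_smul] at hkey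
  -- hkey : ((p:ℕ):ℤ) • (E A0) cu = E (X - C μ) b + ((p:ℕ):ℤ) • (E R) b
  have h5 : E (X - C μ) b = ((p : ℕ) : ℤ) • ((E A0) cu - (E R) b) := by
    rw [smul_sub ((p:ℕ):ℤ) ((E A0) cu) ((E R) b), eq_sub_iff_add_eq]
    simp only [← hE, hEf, hEg, map_zero, add_zero, map_smul] at hkey
    exact hkey.symm
  set a' : Additive Kˣ := (E A0) cu - (E R) b with ha'
  refine ⟨((Additive.toMul a' : Kˣ) : K), Units.ne_zero _, ?_⟩
  have h6 : ((Additive.toMul (E (X - C μ) b) : Kˣ) : K) = σ B' * B' ^ (-μ) := by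
    have h7 : E (X - C μ) b = φ b + (-μ) • b := by
      rw [map_sub, aeval_X, aeval_C, LinearMap.sub_apply, Module.algebraMap_end_apply,
        sub_eq_add_neg, neg_smul]
    rw [h7, val_add, val_zsmul, hφ, phiOf_apply]
    rfl
  have h8 : ((Additive.toMul (E (X - C μ) b) : Kˣ) : K) =
      ((Additive.toMul a' : Kˣ) : K) ^ (p : ℕ) := by
    rw [h5, val_zsmul, zpow_natCast]
  rw [h6] at h8
  -- h8 : σ B' * B' ^ (-μ) = α ^ p
  have hμne : B' ^ μ ≠ 0 := zpow_ne_zero _ hB'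
  calc σ B' = σ B' * B' ^ (-μ) * B' ^ μ := by
        rw [mul_assoc, ← zpow_add₀ hB']
        simp
    _ = B' ^ μ * ((Additive.toMul a' : Kˣ) : K) ^ (p : ℕ) := by rw [h8]; ring
end
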